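/- arXiv:1905.00327 — 8 statements merged into one kernel-verified Lean document; each statement's English description precedes it below -/
import Mathlib

section
/- Let (μ(n))_{n≥0} be a sequence in a field with μ(0)=1 such that all Hankel determinants H_n = det(μ(i+j))_{i,j=0}^{n-1} are nonzero. Define p(n,j) = D_j(0,n)/D_n(0,n), where D_j(a,b) is the determinant of the (b-a)×(b-a) matrix whose rows are (μ(a+r),...,μ(j-1+r),μ(j+1+r),...,μ(b+r)) for r=0,...,b-a-1 (i.e., the Hankel-type matrix with column index j omitted). Then for all m,n ≥ 1: det(μ(i+j))_{i,j=0}^{m-1} · det(p(i+m,j))_{i,j=0}^{n-1} = det(μ(i+j+n))_{i,j=0}^{m-1}. -/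
/-
With `L (x ^ k) = μ k` and `p_N` the monic orthogonal polynomials, a Laplace expansion shows
`L (x ^ K * p_N) = 0` for `K < N` and `L (x ^ N * p_N) = H_{N+1} / H_N`. Multiply the coefficient
matrix of `p_m, …, p_{m+n-1}`, completed by unit rows, with the Hankel matrix of order `n + m`
whose columns are rotated by `m`. By orthogonality the product is block lower triangular: one
block is upper triangular with diagonal `H_{i+m+1} / H_{i+m}`, which telescopes to
`H_{n+m} / H_m`, and the other is the shifted Hankel matrix `(μ (i + j + n))`. Taking
determinants, both factors pick up the same sign `(-1) ^ (m * n)`.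
-/

/-- `Dm μ a b j` : determinant of the `(b-a)×(b-a)` Hankel-type matrix on
`μ a, …, μ b` with the column containing `μ j` (in the top row) deleted;
`0` if `j < a` or `j > b`. -/
noncomputable def Dm {F : Type*} [Field F] (μ : ℕ → F) (a b j : ℕ) : F :=
  if a ≤ j ∧ j ≤ b then
    Matrix.det (Matrix.of fun r c : Fin (b - a) =>
      μ (a + (r : ℕ) + (if (c : ℕ) < j - a then (c : ℕ) else (c : ℕ) + 1)))
  else 0

namespace Cigler

open Matrix Finset

variable {F : Type*} [Field F] (μ : ℕ → F)

def hankel (k : ℕ) : Matrix (Fin k) (Fin k) F :=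
  of fun i j => μ (i + j)

lemma val_succAbove {N : ℕ} (p : Fin (N + 1)) (c : Fin N) :
    (p.succAbove c : ℕ) = if (c : ℕ) < p then (c : ℕ) else c + 1 := by
  rcases lt_or_ge (c : ℕ) p with h | h
  · rw [Fin.succAbove_of_castSucc_lt _ _ h, if_pos h, Fin.val_castSucc]
  · rw [Fin.succAbove_of_le_castSucc _ _ h, if_neg (not_lt.2 h), Fin.val_succ]

lemma Dm_zero_eq_det_submatrix {N : ℕ} (j : Fin (N + 1)) :
    Dm μ 0 N j = ((hankel μ (N + 1)).submatrix Fin.castSucc j.succAbove).det := by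
  rw [Dm, if_pos ⟨Nat.zero_le _, Nat.lt_succ_iff.1 j.isLt⟩]
  congr 1
  ext r c
  simp [hankel, val_succAbove]

lemma Dm_zero_of_lt {N j : ℕ} (h : N < j) : Dm μ 0 N j = 0 :=
  if_neg (by omega)

lemma Dm_zero_self (N : ℕ) : Dm μ 0 N N = (hankel μ N).det := by
  have h := Dm_zero_eq_det_submatrix μ (Fin.last N)
  rw [Fin.succAbove_last] at h
  exact h

/-- The coefficient of `x ^ j` in the monic orthogonal polynomial `p_N`; the sign `(-1) ^ (N - j)`
is written `(-1) ^ (N + j)` to avoid truncated subtraction. -/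
noncomputable def orthPolyCoeff (N j : ℕ) : F :=
  (-1) ^ (N + j) * (Dm μ 0 N j / Dm μ 0 N N)

/-- Laplace expansion along the last row. -/
lemma sum_orthPolyCoeff_mul {M N : ℕ} (hNM : N < M) (K : ℕ) :
    ∑ j : Fin M, orthPolyCoeff μ N j * μ (j + K) =
      ((hankel μ (N + 1)).updateRow (Fin.last N) (fun c => μ (K + c))).det /
        (hankel μ N).det := by
  have hvanish : ∀ j ∈ range M, j ∉ range (N + 1) → orthPolyCoeff μ N j * μ (j + K) = 0 :=
    fun j _ hj => by
      rw [orthPolyCoeff, Dm_zero_of_lt μ (by simpa using hj)]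
      simp
  rw [Fin.sum_univ_eq_sum_range (fun j => orthPolyCoeff μ N j * μ (j + K)),
    ← sum_subset (range_subset_range.2 hNM) hvanish,
    ← Fin.sum_univ_eq_sum_range (fun j => orthPolyCoeff μ N j * μ (j + K)),
    det_succ_row _ (Fin.last N), sum_div]
  refine sum_congr rfl fun j _ => ?_
  simp only [orthPolyCoeff, Dm_zero_self, updateRow_self, Fin.val_last, Fin.succAbove_last,
    Dm_zero_eq_det_submatrix]
  rw [show ((hankel μ (N + 1)).updateRow (Fin.last N) (fun c => μ (K + c))).submatrix
      Fin.castSucc j.succAbove = (hankel μ (N + 1)).submatrix Fin.castSucc j.succAbove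
    from by ext r c; simp, add_comm K]
  ring

lemma sum_orthPolyCoeff_mul_of_lt {M N K : ℕ} (hNM : N < M) (hK : K < N) :
    ∑ j : Fin M, orthPolyCoeff μ N j * μ (j + K) = 0 := by
  have hrow : (fun c : Fin (N + 1) => μ (K + c)) = hankel μ (N + 1) (Fin.castSucc ⟨K, hK⟩) :=
    rfl
  rw [sum_orthPolyCoeff_mul μ hNM, hrow, det_updateRow_eq_zero (Fin.castSucc_lt_last _).ne,
    zero_div]

lemma sum_orthPolyCoeff_mul_self {M N : ℕ} (hNM : N < M) :
    ∑ j : Fin M, orthPolyCoeff μ N j * μ (j + N) =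
      (hankel μ (N + 1)).det / (hankel μ N).det := by
  rw [sum_orthPolyCoeff_mul μ hNM]
  congr 2
  exact updateRow_eq_self _ _

lemma det_of_neg_one_pow_add_mul {R : Type*} [CommRing R] {n : ℕ} (s : ℕ)
    (P : Matrix (Fin n) (Fin n) R) :
    (of fun i j : Fin n => (-1) ^ ((i : ℕ) + s + j) * P i j).det = (-1) ^ (s * n) * P.det := by
  have hsplit : (of fun i j : Fin n => (-1) ^ ((i : ℕ) + s + j) * P i j) =
      of fun i j : Fin n =>
        (-1) ^ s * (-1) ^ (i : ℕ) * (of fun i j : Fin n => (-1) ^ (j : ℕ) * P i j) i j := by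
    ext i j
    simp only [of_apply, pow_add]
    ring
  have hsq : ∏ i : Fin n, ((-1 : R) ^ (i : ℕ) * (-1) ^ (i : ℕ)) = 1 :=
    prod_eq_one fun i _ => by rw [← mul_pow, neg_one_mul, neg_neg, one_pow]
  rw [hsplit, det_mul_column, det_mul_row, ← mul_assoc, prod_mul_distrib, mul_assoc (∏ _i, _),
    ← prod_mul_distrib, hsq, mul_one, prod_const, card_univ, Fintype.card_fin, ← pow_mul]

lemma val_finRotate_pow {N : ℕ} (k : ℕ) (x : Fin N) :
    ((finRotate N ^ k) x : ℕ) = (x + k) % N := by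
  rcases N with _ | N
  · exact x.elim0
  induction k with
  | zero => simp [Nat.mod_eq_of_lt x.isLt]
  | succ k ih =>
    rw [pow_succ', Equiv.Perm.mul_apply, finRotate_apply, Fin.val_add, ih, Fin.val_one',
      Nat.add_mod_mod, Nat.mod_add_mod, add_assoc]

lemma det_submatrix_finRotate_pow {R : Type*} [CommRing R] {N : ℕ}
    (M : Matrix (Fin N) (Fin N) R) (k : ℕ) :
    (M.submatrix id (finRotate N ^ k)).det = (-1) ^ ((N - 1) * k) * M.det := by
  rw [det_permute', map_pow, sign_finRotate]
  push_cast
  rw [pow_mul]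

lemma mul_prod_div_succ_eq {G₀ : Type*} [CommGroupWithZero G₀] (f : ℕ → G₀)
    (hf : ∀ k, f k ≠ 0) (m n : ℕ) : f m * ∏ i : Fin n, f (i + m + 1) / f (i + m) = f (n + m) := by
  induction n with
  | zero => simp
  | succ n ih =>
    simp only [Fin.prod_univ_castSucc, Fin.val_castSucc, Fin.val_last]
    rw [← mul_assoc, ih, mul_div_cancel₀ _ (hf _), add_right_comm]

section Blocks

variable (m n : ℕ)

noncomputable def orthPolyCoeffMatrix : Matrix (Fin n ⊕ Fin m) (Fin n ⊕ Fin m) F :=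
  fromBlocks (of fun i j : Fin n => orthPolyCoeff μ (i + m) j)
    (of fun i (b : Fin m) => orthPolyCoeff μ (i + m) (n + b)) 0 1

/-- The Hankel matrix of order `n + m` with its columns rotated by `m`: column `inl j` is
`μ (· + m + j)` and column `inr b` is `μ (· + b)`. -/
def rotatedHankel : Matrix (Fin n ⊕ Fin m) (Fin n ⊕ Fin m) F :=
  ((hankel μ (n + m)).submatrix id (finRotate (n + m) ^ m)).submatrix
    finSumFinEquiv finSumFinEquiv

lemma det_rotatedHankel :
    (rotatedHankel μ m n).det = (-1) ^ (m * n) * (hankel μ (n + m)).det := by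
  rw [rotatedHankel, det_submatrix_equiv_self, det_submatrix_finRotate_pow]
  rcases m with _ | m
  · simp
  rw [show (n + (m + 1) - 1) * (m + 1) = (m + 1) * n + m * (m + 1) by
      rw [← add_assoc, Nat.add_sub_cancel]; ring,
    pow_add, (Nat.even_mul_succ_self m).neg_one_pow, mul_one]

lemma val_finRotate_pow_finSumFinEquiv_inl (j : Fin n) :
    ((finRotate (n + m) ^ m) (finSumFinEquiv (Sum.inl j)) : ℕ) = m + j := by
  rw [val_finRotate_pow, finSumFinEquiv_apply_left, Fin.val_castAdd,
    Nat.mod_eq_of_lt (by omega), add_comm]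

lemma val_finRotate_pow_finSumFinEquiv_inr (b : Fin m) :
    ((finRotate (n + m) ^ m) (finSumFinEquiv (Sum.inr b)) : ℕ) = b := by
  rw [val_finRotate_pow, finSumFinEquiv_apply_right, Fin.val_natAdd, add_right_comm,
    Nat.add_mod_left, Nat.mod_eq_of_lt (by omega)]

lemma orthPolyCoeffMatrix_mul_rotatedHankel_inl (i : Fin n) (l : Fin n ⊕ Fin m) :
    (orthPolyCoeffMatrix μ m n * rotatedHankel μ m n) (Sum.inl i) l =
      ∑ k : Fin (n + m), orthPolyCoeff μ (i + m) k *
        μ (k + (finRotate (n + m) ^ m) (finSumFinEquiv l)) := by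
  simp [mul_apply, Fin.sum_univ_add, rotatedHankel, orthPolyCoeffMatrix, hankel]

lemma orthPolyCoeffMatrix_mul_rotatedHankel_inr (a : Fin m) :
    (orthPolyCoeffMatrix μ m n * rotatedHankel μ m n) (Sum.inr a) =
      rotatedHankel μ m n (Sum.inr a) := by
  ext l
  simp [mul_apply, orthPolyCoeffMatrix, one_apply]

lemma toBlocks₁₂_orthPolyCoeffMatrix_mul_rotatedHankel :
    (orthPolyCoeffMatrix μ m n * rotatedHankel μ m n).toBlocks₁₂ = 0 := by
  ext i b
  rw [toBlocks₁₂, of_apply, orthPolyCoeffMatrix_mul_rotatedHankel_inl,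
    val_finRotate_pow_finSumFinEquiv_inr]
  exact sum_orthPolyCoeff_mul_of_lt μ (by omega) (by omega)

lemma det_toBlocks₁₁_orthPolyCoeffMatrix_mul_rotatedHankel :
    (orthPolyCoeffMatrix μ m n * rotatedHankel μ m n).toBlocks₁₁.det =
      ∏ i : Fin n, (hankel μ (i + m + 1)).det / (hankel μ (i + m)).det := by
  have hentry : ∀ i j : Fin n,
      (orthPolyCoeffMatrix μ m n * rotatedHankel μ m n).toBlocks₁₁ i j =
        ∑ k : Fin (n + m), orthPolyCoeff μ (i + m) k * μ (k + (j + m)) := fun i j => by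
    rw [toBlocks₁₁, of_apply, orthPolyCoeffMatrix_mul_rotatedHankel_inl,
      val_finRotate_pow_finSumFinEquiv_inl, add_comm m]
  rw [det_of_isUpperTriangular fun i j (hji : j < i) => by
    rw [hentry]; exact sum_orthPolyCoeff_mul_of_lt μ (by omega) (by simpa using hji)]
  refine prod_congr rfl fun i _ => ?_
  rw [hentry]
  exact sum_orthPolyCoeff_mul_self μ (by omega)

lemma toBlocks₂₂_orthPolyCoeffMatrix_mul_rotatedHankel :
    (orthPolyCoeffMatrix μ m n * rotatedHankel μ m n).toBlocks₂₂ =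
      of fun a b : Fin m => μ (a + b + n) := by
  ext a b
  rw [toBlocks₂₂, of_apply, orthPolyCoeffMatrix_mul_rotatedHankel_inr]
  simp only [rotatedHankel, hankel, submatrix_apply, of_apply, id]
  rw [val_finRotate_pow_finSumFinEquiv_inr, finSumFinEquiv_apply_right, Fin.val_natAdd]
  ring_nf

lemma det_orthPolyCoeffMatrix_mul_rotatedHankel :
    (orthPolyCoeffMatrix μ m n * rotatedHankel μ m n).det =
      (∏ i : Fin n, (hankel μ (i + m + 1)).det / (hankel μ (i + m)).det) *
        (of fun a b : Fin m => μ (a + b + n)).det := by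
  rw [← fromBlocks_toBlocks (orthPolyCoeffMatrix μ m n * rotatedHankel μ m n),
    toBlocks₁₂_orthPolyCoeffMatrix_mul_rotatedHankel, det_fromBlocks_zero₁₂,
    det_toBlocks₁₁_orthPolyCoeffMatrix_mul_rotatedHankel,
    toBlocks₂₂_orthPolyCoeffMatrix_mul_rotatedHankel]

lemma det_orthPolyCoeffMatrix :
    (orthPolyCoeffMatrix μ m n).det = (-1) ^ (m * n) *
      (of fun i j : Fin n => Dm μ 0 (i + m) j / Dm μ 0 (i + m) (i + m)).det := by
  rw [orthPolyCoeffMatrix, det_fromBlocks_zero₂₁, det_one, mul_one,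
    ← det_of_neg_one_pow_add_mul]
  rfl

lemma det_orthPolyCoeff_mul_det_hankel :
    (of fun i j : Fin n => Dm μ 0 (i + m) j / Dm μ 0 (i + m) (i + m)).det *
        (hankel μ (n + m)).det =
      (∏ i : Fin n, (hankel μ (i + m + 1)).det / (hankel μ (i + m)).det) *
        (of fun a b : Fin m => μ (a + b + n)).det := by
  have hdet := det_mul (orthPolyCoeffMatrix μ m n) (rotatedHankel μ m n)
  rw [det_orthPolyCoeffMatrix_mul_rotatedHankel, det_orthPolyCoeffMatrix,
    det_rotatedHankel] at hdet
  rw [hdet, mul_mul_mul_comm, ← mul_pow, neg_one_mul, neg_neg, one_pow, one_mul]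

end Blocks

end Cigler

theorem cigler_conjecture_general {F : Type*} [Field F] (μ : ℕ → F)
    (hH : ∀ n : ℕ, Matrix.det (Matrix.of fun i j : Fin n => μ (i + j)) ≠ 0)
    (m n : ℕ) :
    Matrix.det (Matrix.of fun i j : Fin m => μ (i + j)) *
      Matrix.det (Matrix.of fun i j : Fin n =>
        Dm μ 0 ((i : ℕ) + m) (j : ℕ) / Dm μ 0 ((i : ℕ) + m) ((i : ℕ) + m)) =
    Matrix.det (Matrix.of fun i j : Fin m => μ ((i : ℕ) + j + n)) := by
  change (Cigler.hankel μ m).det * _ = _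
  refine mul_right_cancel₀ (b := (Cigler.hankel μ (n + m)).det) (hH (n + m)) ?_
  rw [mul_assoc, Cigler.det_orthPolyCoeff_mul_det_hankel, ← mul_assoc,
    Cigler.mul_prod_div_succ_eq (fun k => (Cigler.hankel μ k).det) hH, mul_comm]

theorem cigler_conjecture {F : Type*} [Field F] (μ : ℕ → F) (hμ0 : μ 0 = 1)
    (hH : ∀ n : ℕ, Matrix.det (Matrix.of fun i j : Fin n => μ (i + j)) ≠ 0)
    (m n : ℕ) (hm : 1 ≤ m) (hn : 1 ≤ n) :
    Matrix.det (Matrix.of fun i j : Fin m => μ (i + j)) *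
      Matrix.det (Matrix.of fun i j : Fin n =>
        Dm μ 0 ((i : ℕ) + m) (j : ℕ) / Dm μ 0 ((i : ℕ) + m) ((i : ℕ) + m)) =
    Matrix.det (Matrix.of fun i j : Fin m => μ ((i : ℕ) + j + n)) :=
  cigler_conjecture_general μ hH m n
end

section
/- Let (μ(n))_{n≥0} be a sequence of indeterminates (or generic field elements). For 0 ≤ a ≤ j ≤ b define D_j(μ;a,b) as the determinant of the (b-a)×(b-a) matrix with (r,c) entry μ(a+r+c) for columns indexed by c ∈ {a,...,b}\{j} (shifted appropriately), i.e., the Hankel matrix on rows μ(a),...,μ(b-1) with column j deleted; set D_j(μ;a,b)=0 for j<a or j>b. Let ν(i)=μ(i+1). Then for n ≥ 2 and m ≥ 1: det(D_j(μ;0,i+m))_{i,j=0}^{n-1} = D_0(μ;0,m) · det(D_j(ν;0,i+m))_{i,j=0}^{n-2} · ∏_{i=1}^{n-1} D_{i+m}(μ;0,i+m)/D_{i+m}(μ;1,i+m). -/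
open Matrix Finset

theorem Finset.prod_Icc_one_eq_prod_fin {M : Type*} [CommMonoid M] (f : ℕ → M) (n : ℕ) :
    ∏ i ∈ Icc 1 n, f i = ∏ i : Fin n, f (i + 1) := by
  rw [Fin.prod_univ_eq_prod_range (fun i => f (i + 1)), range_eq_Ico, prod_Ico_add',
    Ico_add_one_right_eq_Icc]

namespace Matrix

variable {R : Type*} [CommRing R]

theorem det_updateCol_single {k : ℕ} (M : Matrix (Fin (k + 1)) (Fin (k + 1)) R)
    (j : Fin (k + 1)) (c : R) :
    (M.updateCol j (Pi.single j c)).det = c * (M.submatrix j.succAbove j.succAbove).det := by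
  rw [det_succ_column _ j, Fintype.sum_eq_single j fun i hi => by simp [hi]]
  simp [← two_mul, pow_mul]

theorem det_succ_column_zero_of_eq_zero {k : ℕ} (M : Matrix (Fin (k + 1)) (Fin (k + 1)) R)
    (h : ∀ i : Fin k, M i.succ 0 = 0) : M.det = M 0 0 * (M.submatrix Fin.succ Fin.succ).det := by
  rw [det_succ_column_zero, Fin.sum_univ_succ]
  simp [h]

theorem det_of_vecCons_single {k : ℕ} (p : Fin (k + 1)) (H : Fin k → Fin (k + 1) → R) :
    (of (vecCons (Pi.single p 1) H)).det =
      (-1) ^ (p : ℕ) * (of fun r c => H r (p.succAbove c)).det := by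
  rw [det_succ_row_zero, Fintype.sum_eq_single p fun c hc => by simp [hc]]
  simp only [of_apply, cons_val_zero, Pi.single_eq_same, mul_one]
  rfl

theorem det_updateCol_updateCol_one {n : Type*} [Fintype n] [DecidableEq n] {p q : n}
    (hpq : p ≠ q) (u v : n → R) :
    (((1 : Matrix n n R).updateCol p u).updateCol q v).det = u p * v q - v p * u q := by
  -- Weinstein–Aronszajn: the matrix is `1 + C * E`, where `E` consists of the rows `p, q` of `1`.
  let e : Fin 2 → n := ![p, q]
  let C : Matrix n (Fin 2) R :=
    of fun i => ![u i - (1 : Matrix n n R) i p, v i - (1 : Matrix n n R) i q]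
  have hD : ((1 : Matrix n n R).updateCol p u).updateCol q v =
      1 + C * (1 : Matrix n n R).submatrix e id := by
    ext i c
    rw [add_apply, mul_apply, Fin.sum_univ_two]
    by_cases hq : c = q
    · subst hq; simp [C, e, one_apply, hpq]
    by_cases hp : c = p
    · subst hp; simp [C, e, one_apply, hq, Ne.symm hq]
    · simp [C, e, one_apply, hq, hp, Ne.symm hp, Ne.symm hq]
  have hV : 1 + (1 : Matrix n n R).submatrix e id * C = !![u p, v p; u q, v q] := by
    ext a b
    simp only [add_apply, mul_apply, submatrix_apply, id, one_apply, ite_mul, one_mul, zero_mul,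
      sum_ite_eq, mem_univ, if_true]
    fin_cases a <;> fin_cases b <;> simp [C, e, one_apply, hpq, Ne.symm hpq]
  rw [hD, det_one_add_mul_comm, hV, det_fin_two_of]

theorem mulVec_adjugate_col {n : Type*} [Fintype n] [DecidableEq n] (A : Matrix n n R) (j : n) :
    A *ᵥ (fun i => adjugate A i j) = Pi.single j A.det := by
  ext i
  have := congr_fun₂ (mul_adjugate A) i j
  simp only [mul_apply, smul_apply, one_apply, smul_eq_mul, mul_ite, mul_one, mul_zero] at this
  simp [mulVec, dotProduct, this, Pi.single_apply]

theorem desnanot_jacobi_of_det_ne_zero [IsDomain R] {k : ℕ}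
    (A : Matrix (Fin (k + 2)) (Fin (k + 2)) R) (hA : A.det ≠ 0) :
    A.det * (A.submatrix (Fin.castSucc ∘ Fin.succ) (Fin.castSucc ∘ Fin.succ)).det =
      (A.submatrix Fin.succ Fin.succ).det * (A.submatrix Fin.castSucc Fin.castSucc).det -
        (A.submatrix Fin.succ Fin.castSucc).det * (A.submatrix Fin.castSucc Fin.succ).det := by
  -- `A * D` is `A` with its first and last columns replaced by multiples of unit vectors, and
  -- `det D` is a `2 × 2` minor of `adjugate A`.
  set L := Fin.last (k + 1)
  let D := ((1 : Matrix _ _ R).updateCol 0 (fun i => adjugate A i 0)).updateCol L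
    (fun i => adjugate A i L)
  have hAD : A * D = (A.updateCol 0 (Pi.single 0 A.det)).updateCol L (Pi.single L A.det) := by
    simp only [D, mul_updateCol, Matrix.mul_one, mulVec_adjugate_col]
  have hcorner : (A.updateCol 0 (Pi.single 0 A.det)).submatrix Fin.castSucc Fin.castSucc =
      (A.submatrix Fin.castSucc Fin.castSucc).updateCol 0 (Pi.single 0 A.det) := by
    ext i j
    simp [updateCol_apply, Pi.single_apply]
  have hdetAD : (A * D).det =
      A.det * (A.det *
        (A.submatrix (Fin.castSucc ∘ Fin.succ) (Fin.castSucc ∘ Fin.succ)).det) := by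
    rw [hAD, det_updateCol_single, Fin.succAbove_last, hcorner, det_updateCol_single,
      Fin.succAbove_zero, submatrix_submatrix]
  have hdetD : D.det = adjugate A 0 0 * adjugate A L L - adjugate A 0 L * adjugate A L 0 :=
    det_updateCol_updateCol_one Fin.last_pos.ne _ _
  have hsign : (-1 : R) ^ (k + 1) * (-1) ^ (k + 1) = 1 := pow_mul_pow_eq_one _ (by norm_num)
  have key := det_mul A D
  rw [hdetAD, hdetD] at key
  rw [mul_left_cancel₀ hA key]
  simp only [adjugate_fin_succ_eq_det_submatrix, Fin.succAbove_zero, L, Fin.succAbove_last,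
    Fin.val_zero, Fin.val_last, add_zero, zero_add, pow_zero, one_mul,
    (Even.add_self _).neg_one_pow]
  linear_combination
    -(A.submatrix Fin.succ Fin.castSucc).det * (A.submatrix Fin.castSucc Fin.succ).det * hsign

theorem desnanot_jacobi {k : ℕ} (A : Matrix (Fin (k + 2)) (Fin (k + 2)) R) :
    A.det * (A.submatrix (Fin.castSucc ∘ Fin.succ) (Fin.castSucc ∘ Fin.succ)).det =
      (A.submatrix Fin.succ Fin.succ).det * (A.submatrix Fin.castSucc Fin.castSucc).det -
        (A.submatrix Fin.succ Fin.castSucc).det * (A.submatrix Fin.castSucc Fin.succ).det := by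
  -- Specialise the identity for the generic matrix, whose determinant is nonzero.
  let X := mvPolynomialX (Fin (k + 2)) (Fin (k + 2)) ℤ
  let f : MvPolynomial (Fin (k + 2) × Fin (k + 2)) ℤ →+* R :=
    MvPolynomial.eval₂Hom (Int.castRingHom R) fun p => A p.1 p.2
  have hX : X.map f = A := mvPolynomialX_map_eval₂ (Int.castRingHom R) A
  have := congrArg f (desnanot_jacobi_of_det_ne_zero X (det_mvPolynomialX_ne_zero _ ℤ))
  simpa only [map_mul, map_sub, RingHom.map_det, RingHom.mapMatrix_apply, ← submatrix_map,
    hX] using this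

theorem det_of_row_recurrence {n : ℕ} (f g : ℕ → Fin (n + 1) → R) (c d : ℕ → R)
    (h0 : g 0 = f 0) (hsucc : ∀ i, g (i + 1) = c (i + 1) • f (i + 1) - d (i + 1) • f i) :
    (of fun i : Fin (n + 1) => g i).det =
      (∏ i ∈ Icc 1 n, c i) * (of fun i : Fin (n + 1) => f i).det := by
  let w : ℕ → R := fun i => if i = 0 then 1 else c i
  let T : Matrix (Fin (n + 1)) (Fin (n + 1)) R := of fun i k =>
    (if (k : ℕ) = i then w i else 0) - (if (k : ℕ) + 1 = i then d i else 0)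
  have hT : (of fun i : Fin (n + 1) => g i) = T * of fun i : Fin (n + 1) => f i := by
    ext ⟨i, hi⟩ j
    simp only [of_apply, mul_apply, T]
    rw [Fin.sum_univ_eq_sum_range
      (fun k => ((if k = i then w i else 0) - (if k + 1 = i then d i else 0)) * f k j)]
    rcases i with _ | i
    · simp [w, h0]
    · simp [w, hsucc, sub_mul, ite_mul, sum_sub_distrib, show i < n by omega,
        show i ≤ n by omega]
  have hlower : T.IsLowerTriangular := by
    intro i k hik
    have : (i : ℕ) < k := hik
    simp only [T, of_apply]
    rw [if_neg (by omega), if_neg (by omega), sub_zero]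
  rw [hT, det_mul, det_of_isLowerTriangular _ hlower, Fin.prod_univ_succ,
    prod_Icc_one_eq_prod_fin]
  simp [T, w]

end Matrix

def hankel {α : Type*} (μ : ℕ → α) (k : ℕ) : Matrix (Fin k) (Fin k) α :=
  of fun r c => μ (r + c)

def borderedHankel {α : Type*} [Zero α] [One α] (μ : ℕ → α) (k j : ℕ) :
    Matrix (Fin (k + 1)) (Fin (k + 1)) α :=
  of (vecCons (fun c => if (c : ℕ) = j then 1 else 0) fun r c => μ (r + c))

section Dm

variable {F : Type*} [Field F] (μ : ℕ → F)

theorem Dm_eq_zero_of_lt {a b j : ℕ} (h : j < a) : Dm μ a b j = 0 :=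
  if_neg (by omega)

theorem Dm_eq_zero_of_gt {a b j : ℕ} (h : b < j) : Dm μ a b j = 0 :=
  if_neg (by omega)

theorem Dm_one_succ (b j : ℕ) : Dm μ 1 (b + 1) (j + 1) = Dm (fun i => μ (i + 1)) 0 b j := by
  by_cases hj : j ≤ b
  · rw [Dm, Dm, if_pos ⟨by omega, by omega⟩, if_pos ⟨by omega, hj⟩]
    congr 1
    ext r c
    simp only [of_apply, Nat.add_sub_cancel, Nat.sub_zero]
    congr 1
    split_ifs <;> omega
  · rw [Dm_eq_zero_of_gt _ (by omega), Dm_eq_zero_of_gt _ (by omega)]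

theorem Dm_zero_eq_det {b j : ℕ} (hj : j ≤ b) :
    Dm μ 0 b j =
      (of fun r c : Fin b => μ (r + (Fin.succAbove ⟨j, by omega⟩ c : ℕ))).det := by
  rw [Dm, if_pos ⟨Nat.zero_le _, hj⟩]
  congr 1
  ext r c
  simp only [of_apply, zero_add, Nat.sub_zero, Fin.succAbove, Fin.lt_def, Fin.val_castSucc]
  split_ifs <;> simp

theorem Dm_zero_self (b : ℕ) : Dm μ 0 b b = (hankel μ b).det := by
  rw [Dm_zero_eq_det μ le_rfl]
  congr 1
  ext r c
  simp [hankel, Fin.succAbove, Fin.lt_def]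

theorem det_borderedHankel (k j : ℕ) : (borderedHankel μ k j).det = (-1) ^ j * Dm μ 0 k j := by
  by_cases hj : j ≤ k
  · have hrow : (fun c : Fin (k + 1) => if (c : ℕ) = j then (1 : F) else 0) =
        Pi.single ⟨j, by omega⟩ 1 := by
      ext c; simp [Pi.single_apply, Fin.ext_iff]
    rw [borderedHankel, hrow, det_of_vecCons_single, Dm_zero_eq_det μ hj]
  · rw [Dm_eq_zero_of_gt μ (by omega), mul_zero]
    exact det_eq_zero_of_row_eq_zero 0 fun c => by
      simp [borderedHankel, show (c : ℕ) ≠ j by omega]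

theorem Dm_three_term (b j : ℕ) :
    Dm μ 1 (b + 1) (b + 1) * Dm μ 0 (b + 1) j =
      Dm μ 0 (b + 1) (b + 1) * Dm μ 1 (b + 1) j + Dm μ 1 (b + 2) (b + 2) * Dm μ 0 b j := by
  set A := borderedHankel μ (b + 1) j
  have h_inner : (A.submatrix (Fin.castSucc ∘ Fin.succ) (Fin.castSucc ∘ Fin.succ)).det =
      Dm μ 1 (b + 1) (b + 1) := by
    rw [Dm_one_succ, Dm_zero_self]
    rfl
  have h_ss : (A.submatrix Fin.succ Fin.succ).det = Dm μ 1 (b + 2) (b + 2) := by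
    rw [Dm_one_succ, Dm_zero_self]
    rfl
  have h_sc : (A.submatrix Fin.succ Fin.castSucc).det = Dm μ 0 (b + 1) (b + 1) := by
    rw [Dm_zero_self]
    rfl
  have h_cc : (A.submatrix Fin.castSucc Fin.castSucc).det = (-1) ^ j * Dm μ 0 b j := by
    rw [← det_borderedHankel]
    congr 1
    ext r c
    refine Fin.cases ?_ (fun r => ?_) r <;> simp [A, borderedHankel]
  have h_cs : (-1) ^ j * (A.submatrix Fin.castSucc Fin.succ).det = -Dm μ 1 (b + 1) j := by
    rcases j with _ | j
    · rw [Dm_eq_zero_of_lt μ one_pos, neg_zero, det_eq_zero_of_row_eq_zero 0 fun c => by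
        simp [A, borderedHankel], mul_zero]
    · have : A.submatrix Fin.castSucc Fin.succ = borderedHankel (fun i => μ (i + 1)) b j := by
        ext r c
        refine Fin.cases ?_ (fun r => ?_) r <;> simp [A, borderedHankel, add_assoc]
      rw [this, det_borderedHankel, Dm_one_succ, ← mul_assoc, ← pow_add,
        show j + 1 + j = 2 * j + 1 by ring, pow_succ, pow_mul]
      simp
  have key := desnanot_jacobi A
  rw [det_borderedHankel, h_inner, h_ss, h_sc, h_cc] at key
  have hsign : (-1 : F) ^ j * (-1) ^ j = 1 := pow_mul_pow_eq_one _ (by norm_num)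
  linear_combination (-1) ^ j * key - Dm μ 0 (b + 1) (b + 1) * h_cs -
    (Dm μ 1 (b + 1) (b + 1) * Dm μ 0 (b + 1) j - Dm μ 1 (b + 2) (b + 2) * Dm μ 0 b j) * hsign

end Dm

theorem shifted_moments_induction_step_general {F : Type*} [Field F] (μ : ℕ → F)
    (n m : ℕ) (hn : 2 ≤ n)
    (hden : ∀ i ∈ Finset.Icc 1 (n - 1), Dm μ 1 (i + m) (i + m) ≠ 0) :
    Matrix.det (Matrix.of fun i j : Fin n => Dm μ 0 ((i : ℕ) + m) (j : ℕ)) =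
      Dm μ 0 m 0 *
        Matrix.det (Matrix.of fun i j : Fin (n - 1) =>
          Dm (fun k => μ (k + 1)) 0 ((i : ℕ) + m) (j : ℕ)) *
        ∏ i ∈ Finset.Icc 1 (n - 1),
          Dm μ 0 (i + m) (i + m) / Dm μ 1 (i + m) (i + m) := by
  obtain ⟨p, rfl⟩ : ∃ p, n = p + 2 := ⟨n - 2, by omega⟩
  rw [show p + 2 - 1 = p + 1 from rfl] at hden ⊢
  set c : ℕ → F := fun i => Dm μ 1 (i + m) (i + m)
  set d : ℕ → F := fun i => Dm μ 0 (i + m) (i + m)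
  set g : ℕ → Fin (p + 2) → F := fun i j =>
    if i = 0 then Dm μ 0 m j else d i * Dm μ 1 (i + m) j
  have hrows := det_of_row_recurrence (fun i j => Dm μ 0 (i + m) j) g c (fun i => c (i + 1))
    (by ext j; simp [g]) fun i => by
      ext j
      simp only [g, c, d, if_neg (Nat.succ_ne_zero i), Pi.sub_apply, Pi.smul_apply, smul_eq_mul]
      rw [show i + 1 + m = i + m + 1 by ring, show i + 1 + 1 + m = i + m + 2 by ring]
      linear_combination -Dm_three_term μ (i + m) j
  have hcol : (of fun i : Fin (p + 2) => g i).det = Dm μ 0 m 0 * ((∏ i ∈ Icc 1 (p + 1), d i) *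
      (of fun i j : Fin (p + 1) => Dm (fun k => μ (k + 1)) 0 ((i : ℕ) + m) j).det) := by
    rw [det_succ_column_zero_of_eq_zero _ fun i => by simp [g, Dm_eq_zero_of_lt μ one_pos],
      prod_Icc_one_eq_prod_fin, ← det_mul_column]
    refine congrArg₂ (· * ·) (by simp [g]) (congrArg det ?_)
    ext i j
    simp [g, d, show (i : ℕ) + 1 + m = i + m + 1 by ring, Dm_one_succ]
  have hc : ∏ i ∈ Icc 1 (p + 1), c i ≠ 0 := prod_ne_zero_iff.mpr hden
  rw [prod_div_distrib, ← mul_div_assoc, eq_div_iff hc]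
  linear_combination hrows.symm.trans hcol

theorem shifted_moments_induction_step {F : Type*} [Field F] (μ : ℕ → F)
    (n m : ℕ) (hn : 2 ≤ n) (hm : 1 ≤ m)
    (hden : ∀ i ∈ Finset.Icc 1 (n - 1), Dm μ 1 (i + m) (i + m) ≠ 0) :
    Matrix.det (Matrix.of fun i j : Fin n => Dm μ 0 ((i : ℕ) + m) (j : ℕ)) =
      Dm μ 0 m 0 *
        Matrix.det (Matrix.of fun i j : Fin (n - 1) =>
          Dm (fun k => μ (k + 1)) 0 ((i : ℕ) + m) (j : ℕ)) *
        ∏ i ∈ Finset.Icc 1 (n - 1),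
          Dm μ 0 (i + m) (i + m) / Dm μ 1 (i + m) (i + m) :=
  shifted_moments_induction_step_general μ n m hn hden
end

section
/- Let C_n = (1/(n+1))·binomial(2n,n) be the Catalan numbers. The polynomials p_n(x) = Σ_{j=0}^n (-1)^{n-j} binomial(n+j, n-j) x^j are orthogonal with respect to the moment functional L with L(x^n) = C_n; that is, L(x^k p_n(x)) = 0 for 0 ≤ k < n and L(x^n p_n(x)) ≠ 0. -/
open Finset

private def fsum (n k : ℕ) : ℤ :=
  ∑ j ∈ Finset.range (n + 1),
    (-1 : ℤ) ^ (n - j) * (n + j).choose (n - j) * catalan (k + j)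

private def G (n j : ℕ) : ℤ :=
  if j ≤ n then (-1 : ℤ) ^ (n - j) * (n + j).choose (n - j) else 0

private lemma fsum_eq_G (n k m : ℕ) (h : n + 1 ≤ m) :
    fsum n k = ∑ j ∈ Finset.range m, G n j * catalan (k + j) := by
  rw [fsum]
  have hpad : ∑ j ∈ Finset.range m, G n j * catalan (k + j)
      = ∑ j ∈ Finset.range (n + 1), G n j * catalan (k + j) := by
    refine (Finset.sum_subset (Finset.range_subset_range.2 h) ?_).symm
    intro j _ hj
    have hj' : ¬ j ≤ n := by
      have := Finset.mem_range.not.mp hj; omega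
    simp [G, hj']
  rw [hpad]
  refine Finset.sum_congr rfl fun j hj => ?_
  have hj' : j ≤ n := by
    have := Finset.mem_range.mp hj; omega
  simp [G, hj']

private lemma pascal2 (m j : ℕ) :
    (((m + 2).choose (j + 2) : ℤ)) = m.choose j + 2 * m.choose (j + 1) + m.choose (j + 2) := by
  rw [Nat.choose_succ_succ (m+1) (j+1), Nat.choose_succ_succ m j, Nat.choose_succ_succ m (j+1)]
  push_cast; ring

private lemma coeff_id (n j : ℕ) :
    G (n + 2) j + 2 * G (n + 1) j + G n j = if 1 ≤ j then G (n + 1) (j - 1) else 0 := by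
  rcases j with _ | i
  · simp [G, pow_succ]
    ring
  · rcases le_or_gt (i + 1) n with h | h
    · -- main case: 1 ≤ j = i+1 ≤ n
      obtain ⟨d, rfl⟩ : ∃ d, n = (i + 1) + d := ⟨n - (i + 1), by omega⟩
      have e0 : ((i+1)+d) - (i+1) = d := by omega
      have e1 : ((i+1)+d+1) - (i+1) = d + 1 := by omega
      have e2 : ((i+1)+d+2) - (i+1) = d + 2 := by omega
      have e3 : ((i+1)+d+1) - i = d + 2 := by omega
      simp only [G, if_pos (by omega : i + 1 ≤ (i+1)+d+2),
        if_pos (by omega : i + 1 ≤ (i+1)+d+1), if_pos (by omega : i + 1 ≤ (i+1)+d),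
        if_pos (by omega : 1 ≤ i + 1), if_pos (by omega : i ≤ (i+1)+d+1),
        Nat.add_sub_cancel, e0, e1, e2, e3]
      have s1 : (i+1)+d+2+(i+1) = (2*i+d+2) + 2 := by omega
      have s2 : (i+1)+d+1+(i+1) = (2*i+d+2) + 1 := by omega
      have s3 : (i+1)+d+(i+1) = 2*i+d+2 := by omega
      have s4 : (i+1)+d+1+i = 2*i+d+2 := by omega
      rw [s1, s2, s3, s4]
      have p1 := pascal2 (2*i+d+2) d
      have p2 : (((2*i+d+2) + 1).choose (d+1) : ℤ) =
          (2*i+d+2).choose d + (2*i+d+2).choose (d+1) := by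
        rw [Nat.choose_succ_succ]; push_cast; ring
      linear_combination ((-1:ℤ))^d * p1 - 2 * ((-1:ℤ))^d * p2
    · rcases (by omega : i + 1 = n + 1 ∨ i + 1 = n + 2 ∨ n + 2 < i + 1) with h1 | h1 | h1
      · -- j = n+1
        obtain rfl : n = i := by omega
        simp only [G, if_pos (by omega : n + 1 ≤ n + 2), if_pos (le_refl (n+1)),
          if_neg (by omega : ¬ n + 1 ≤ n), if_pos (by omega : 1 ≤ n + 1), Nat.add_sub_cancel,
          if_pos (by omega : n ≤ n + 1)]
        have e1 : n + 2 - (n + 1) = 1 := by omega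
        have e2 : n + 1 - (n + 1) = 0 := by omega
        have e3 : n + 1 - n = 1 := by omega
        rw [e1, e2, e3]
        have c1 : (n + 2 + (n + 1)).choose 1 = 2*n+3 := by rw [Nat.choose_one_right]; omega
        have c2 : (n + 1 + n).choose 1 = 2*n+1 := by rw [Nat.choose_one_right]; omega
        rw [c1, c2]
        simp only [Nat.choose_zero_right]
        push_cast; ring
      · -- j = n+2
        obtain rfl : i = n + 1 := by omega
        simp only [G, if_pos (le_refl (n+2)), if_neg (by omega : ¬ n + 2 ≤ n + 1),
          if_neg (by omega : ¬ n + 2 ≤ n), if_pos (by omega : 1 ≤ n + 2), Nat.add_sub_cancel,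
          if_pos (by omega : n + 1 ≤ n + 1), Nat.sub_self]
        norm_num
      · have hcond : ¬ i + 1 ≤ n + 2 := by omega
        simp only [G, if_neg hcond, if_neg (by omega : ¬ i + 1 ≤ n + 1),
          if_neg (by omega : ¬ i + 1 ≤ n), if_pos (by omega : 1 ≤ i + 1),
          Nat.add_sub_cancel, if_neg (by omega : ¬ i ≤ n + 1)]
        ring

private lemma fsum_rec (n k : ℕ) :
    fsum (n + 2) k + 2 * fsum (n + 1) k + fsum n k = fsum (n + 1) (k + 1) := by
  rw [fsum_eq_G (n+2) k (n+3) (by omega), fsum_eq_G (n+1) k (n+3) (by omega),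
    fsum_eq_G n k (n+3) (by omega), fsum_eq_G (n+1) (k+1) (n+2) (le_refl _)]
  rw [Finset.mul_sum, ← Finset.sum_add_distrib, ← Finset.sum_add_distrib]
  have key : ∑ j ∈ Finset.range (n + 2), G (n+1) j * catalan (k + 1 + j)
      = ∑ j ∈ Finset.range (n + 3),
          (if 1 ≤ j then G (n+1) (j-1) else 0) * catalan (k + j) := by
    rw [Finset.sum_range_succ' (fun j => (if 1 ≤ j then G (n+1) (j-1) else 0) * catalan (k + j)) (n+2)]
    have hz : ∀ j : ℕ, (if 1 ≤ j + 1 then G (n+1) (j+1-1) else 0) = G (n+1) j := by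
      intro j; simp
    simp only [hz]
    rw [if_neg (by omega : ¬ (1:ℕ) ≤ 0)]
    simp only [zero_mul, add_zero]
    refine Finset.sum_congr rfl fun j _ => ?_
    rw [show k + (j + 1) = k + 1 + j by omega]
  rw [key]
  refine Finset.sum_congr rfl fun j _ => ?_
  have hc := coeff_id n j
  linear_combination (catalan (k+j) : ℤ) * hc

private lemma cat_eq (k : ℕ) :
    (catalan k : ℤ) = (2 * k).choose k - (2 * k).choose (k + 1) := by
  have h1 : (k + 1) * catalan k = (2 * k).choose k := by
    rw [succ_mul_catalan_eq_centralBinom, Nat.centralBinom_eq_two_mul_choose]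
  have h2 : (2 * k).choose (k + 1) * (k + 1) = (2 * k).choose k * k := by
    rw [Nat.choose_succ_right_eq]
    congr 1
    omega
  have hk : ((k : ℤ) + 1) ≠ 0 := by positivity
  have h1' : ((k : ℤ) + 1) * catalan k = (2 * k).choose k := by exact_mod_cast h1
  have h2' : ((2 * k).choose (k + 1) : ℤ) * (k + 1) = (2 * k).choose k * k := by exact_mod_cast h2
  have key : ((k : ℤ) + 1) * (catalan k : ℤ)
      = ((k : ℤ) + 1) * (((2 * k).choose k : ℤ) - (2 * k).choose (k + 1)) := by
    rw [h1']
    linear_combination h2'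
  exact mul_left_cancel₀ hk key

private lemma main_id (n : ℕ) : ∀ k,
    fsum n k = ((2 * k).choose (k + n) : ℤ) - (2 * k).choose (k + n + 1) := by
  induction n using Nat.twoStepInduction with
  | zero =>
    intro k
    simp only [fsum, Finset.sum_range_one, Nat.sub_zero, Nat.sub_self, pow_zero,
      Nat.add_zero, Nat.zero_add, Nat.choose_self]
    rw [cat_eq k]
    norm_num
  | one =>
    intro k
    rw [fsum, Finset.sum_range_succ, Finset.sum_range_one]
    norm_num
    rw [cat_eq k, cat_eq (k+1)]
    have h1 : (2 * (k+1)).choose (k+1) = (2*k+1).choose k + (2*k+1).choose (k+1) := by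
      rw [show 2*(k+1) = (2*k+1)+1 by omega]
      exact Nat.choose_succ_succ (2*k+1) k
    have h2 : (2 * (k+1)).choose (k+1+1) = (2*k+1).choose (k+1) + (2*k+1).choose (k+2) := by
      rw [show 2*(k+1) = (2*k+1)+1 by omega]
      exact Nat.choose_succ_succ (2*k+1) (k+1)
    have h3 : (2*k+1).choose k = (2*k+1).choose (k+1) := by
      rw [← Nat.choose_symm (by omega : k+1 ≤ 2*k+1), show 2*k+1-(k+1) = k by omega]
    have h4 : (2*k+1).choose (k+1) = (2*k).choose k + (2*k).choose (k+1) :=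
      Nat.choose_succ_succ (2*k) k
    have h5 : (2*k+1).choose (k+2) = (2*k).choose (k+1) + (2*k).choose (k+2) :=
      Nat.choose_succ_succ (2*k) (k+1)
    have h1' : ((2 * (k+1)).choose (k+1) : ℤ) = (2*k+1).choose k + (2*k+1).choose (k+1) := by
      exact_mod_cast h1
    have h2' : ((2 * (k+1)).choose (k+1+1) : ℤ) = (2*k+1).choose (k+1) + (2*k+1).choose (k+2) := by
      exact_mod_cast h2
    have h3' : ((2*k+1).choose k : ℤ) = (2*k+1).choose (k+1) := by exact_mod_cast h3
    have h4' : ((2*k+1).choose (k+1) : ℤ) = (2*k).choose k + (2*k).choose (k+1) := by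
      exact_mod_cast h4
    have h5' : ((2*k+1).choose (k+2) : ℤ) = (2*k).choose (k+1) + (2*k).choose (k+2) := by
      exact_mod_cast h5
    rw [show k + 1 + 1 = k + 2 by omega]
    linear_combination h1' - h2' + h3' + h4' - h5'
  | more n ih ih1 =>
    intro k
    have hrec := fsum_rec n k
    have e1 := ih1 (k + 1)
    have e2 := ih1 k
    have e3 := ih k
    rw [show 2 * (k+1) = (2*k) + 2 by omega, show k + 1 + (n + 1) = (k + n) + 2 by omega,
      show (k + n) + 2 + 1 = (k + n + 1) + 2 by omega, pascal2 (2*k) (k+n),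
      pascal2 (2*k) (k+n+1)] at e1
    have goal2 : fsum (n+2) k = fsum (n+1) (k+1) - 2 * fsum (n+1) k - fsum n k := by
      linear_combination hrec
    rw [goal2, e1, e2, e3]
    rw [show k + (n + 1) = k + n + 1 by omega, show k + (n+2) = k + n + 2 by omega,
      show k + n + 2 + 1 = k + n + 3 by omega, show k + n + 1 + 1 = k + n + 2 by omega]
    ring

/-- The polynomials `p_n(x) = Σ_{j=0}^n (-1)^{n-j} C(n+j, n-j) x^j` are orthogonal with
respect to the Catalan moment functional `L(x^n) = C_n`. -/
theorem catalan_orthogonality (n : ℕ) :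
    (∀ k : ℕ, k < n →
      ∑ j ∈ Finset.range (n + 1),
        (-1 : ℤ) ^ (n - j) * (n + j).choose (n - j) * catalan (k + j) = 0) ∧
    ∑ j ∈ Finset.range (n + 1),
      (-1 : ℤ) ^ (n - j) * (n + j).choose (n - j) * catalan (n + j) ≠ 0 := by
  constructor
  · intro k hk
    have h := main_id n k
    rw [fsum] at h
    rw [h, Nat.choose_eq_zero_of_lt (by omega), Nat.choose_eq_zero_of_lt (by omega)]
    simp
  · have h := main_id n n
    rw [fsum] at h
    rw [h, show n + n = 2 * n by omega, Nat.choose_self,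
      Nat.choose_eq_zero_of_lt (by omega)]
    simp
end

section
/- For all integers m ≥ 1 and n ≥ 1: det( binomial(i+j+m, i-j+m) )_{i,j=0}^{n-1} = det(C_{n+i+j})_{i,j=0}^{m-1} / det(C_{i+j})_{i,j=0}^{m-1}, where C_k is the k-th Catalan number. -/
/-!
Let `b(p, k) = C(2p, p + k) - C(2p, p + k + 1)` be the ballot numbers. Row `p` of the lower
unitriangular matrix `B = (b(p, k))` is `Tᵖ e₀` for a tridiagonal operator `T` that is symmetric
for the pairing `∑ₖ f k * g k`, whence `∑ₖ b(p, k) b(q, k) = b(p + q, 0) = C_{p+q}`, and the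
vectors `((-1)^(k+q) C(k + q, 2q))ₖ`, which `T` shifts down in `q`, form the dual basis, i.e. the
columns of `B⁻¹`. The first identity factors the Hankel matrix `(C_{s+i+j})_{i,j<m}` as
`(b(s + i, k)) · (b(j, k))ᵀ` with a unitriangular second factor, so the right-hand side is
`det (b(n + i, k))_{i,k<m}`. The binomial matrix on the left is, up to signs, the minor of `B⁻¹`
on rows `m, …, m + n - 1` and columns `0, …, n - 1`, and Jacobi's complementary minor theorem
equates it with the complementary minor `(b(n + i, k))` of `B`.
-/

open Finset

theorem Nat.choose_add_two_add_two (x r : ℕ) :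
    (x + 2).choose (r + 2) = x.choose r + 2 * x.choose (r + 1) + x.choose (r + 2) := by
  rw [Nat.choose_succ_succ', Nat.choose_succ_succ', Nat.choose_succ_succ' x (r + 1)]
  ring

theorem ite_choose_eq_choose_two_mul (a j : ℕ) :
    (if j ≤ a then (a + j).choose (a - j) else 0) = (a + j).choose (2 * j) := by
  split_ifs with h
  · rw [← Nat.choose_symm (by omega)]
    congr 1
    omega
  · rw [Nat.choose_eq_zero_of_lt (by omega)]

section BallotOp

variable {R : Type*} [CommRing R]

-- At `k = 0` this is `g (k - 1) + 2 g k + g (k + 1)` with the reflection `g (-1) = -g 0`.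
def ballotOp (g : ℕ → R) : ℕ → R
  | 0 => g 0 + g 1
  | k + 1 => g k + 2 * g (k + 1) + g (k + 2)

theorem sum_ballotOp_mul_sub_sum_mul_ballotOp (f g : ℕ → R) (L : ℕ) :
    ∑ k ∈ range (L + 1), ballotOp f k * g k - ∑ k ∈ range (L + 1), f k * ballotOp g k =
      f (L + 1) * g L - f L * g (L + 1) := by
  induction L with
  | zero =>
    simp only [zero_add, sum_range_one, ballotOp]
    ring
  | succ L ih =>
    rw [sum_range_succ, sum_range_succ _ (L + 1)]
    simp only [ballotOp.eq_2]
    linear_combination ih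

theorem sum_ballotOp_mul (f g : ℕ → R) (L : ℕ) (hL : f L = 0) (hL' : f (L + 1) = 0) :
    ∑ k ∈ range (L + 1), ballotOp f k * g k = ∑ k ∈ range (L + 1), f k * ballotOp g k := by
  have := sum_ballotOp_mul_sub_sum_mul_ballotOp f g L
  rw [hL, hL'] at this
  linear_combination this

end BallotOp

/-- The ballot number `C(2p, p - k) - C(2p, p - k - 1)`, written through `C(2p, p + k)` so that
no truncated subtraction occurs. -/
def ballot (p k : ℕ) : ℚ := (2 * p).choose (p + k) - (2 * p).choose (p + k + 1)

theorem ballot_zero_left (k : ℕ) : ballot 0 k = if k = 0 then 1 else 0 := by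
  cases k <;> simp [ballot]

theorem ballot_of_lt {p k : ℕ} (h : p < k) : ballot p k = 0 := by
  rw [ballot, Nat.choose_eq_zero_of_lt (by omega), Nat.choose_eq_zero_of_lt (by omega)]
  simp

theorem ballot_self (p : ℕ) : ballot p p = 1 := by
  rw [ballot, ← two_mul, Nat.choose_self, Nat.choose_eq_zero_of_lt (by omega)]
  simp

theorem ballot_zero_right (p : ℕ) : ballot p 0 = catalan p := by
  have hrec : ((2 * p).choose (p + 1) : ℚ) * (p + 1) = (2 * p).choose p * p := by
    exact_mod_cast (Nat.choose_succ_right_eq (2 * p) p).trans (by congr 1; omega)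
  have hcat : ((p : ℚ) + 1) * catalan p = (2 * p).choose p := by
    exact_mod_cast succ_mul_catalan_eq_centralBinom p
  refine mul_left_cancel₀ (by positivity : (p : ℚ) + 1 ≠ 0) ?_
  rw [ballot, add_zero, hcat]
  linear_combination -hrec

theorem ballot_succ (p k : ℕ) : ballot (p + 1) k = ballotOp (ballot p) k := by
  have h2p : 2 * (p + 1) = 2 * p + 2 := by ring
  cases k with
  | zero =>
    have hmid : ((2 * p + 2).choose (p + 1) : ℚ) =
        2 * ((2 * p).choose p + (2 * p).choose (p + 1)) := by
      rw [Nat.choose_succ_succ', ← Nat.choose_symm_half, Nat.choose_succ_succ' (2 * p) p]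
      push_cast; ring
    have htop := Nat.choose_add_two_add_two (2 * p) p
    simp only [ballotOp, ballot, h2p, add_zero]
    rw [hmid, htop]
    push_cast
    ring_nf
  | succ k =>
    have h1 := Nat.choose_add_two_add_two (2 * p) (p + k)
    have h2 := Nat.choose_add_two_add_two (2 * p) (p + k + 1)
    simp only [ballotOp, ballot, h2p]
    rw [show p + 1 + (k + 1) = p + k + 2 by ring, show p + k + 2 + 1 = p + k + 1 + 2 by ring,
      h1, h2]
    push_cast
    ring_nf

def ballotDual (q k : ℕ) : ℚ := (-1) ^ (k + q) * (k + q).choose (2 * q)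

theorem ballotDual_zero_right (q : ℕ) : ballotDual q 0 = if q = 0 then 1 else 0 := by
  rcases q with _ | q
  · simp [ballotDual]
  · simp [ballotDual, Nat.choose_eq_zero_of_lt (by omega : q + 1 < 2 * (q + 1))]

theorem ballotOp_ballotDual_zero : ballotOp (ballotDual 0) = 0 := by
  funext k
  cases k with
  | zero => simp [ballotOp, ballotDual]
  | succ k =>
    simp only [ballotOp, ballotDual, mul_zero, Nat.choose_zero_right, Nat.cast_one, mul_one,
      Pi.zero_apply]
    ring

theorem ballotOp_ballotDual_succ (q : ℕ) : ballotOp (ballotDual (q + 1)) = ballotDual q := by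
  funext k
  cases k with
  | zero =>
    rcases q with _ | q
    · simp [ballotOp, ballotDual]
    · simp (disch := omega) [ballotOp, ballotDual, Nat.choose_eq_zero_of_lt]
  | succ k =>
    have hx2 : ((k + q + 1 + 2).choose (2 * q + 2) : ℚ) = (k + q + 1).choose (2 * q) +
        2 * (k + q + 1).choose (2 * q + 1) + (k + q + 1).choose (2 * q + 2) := by
      exact_mod_cast Nat.choose_add_two_add_two (k + q + 1) (2 * q)
    have hx1 : ((k + q + 1 + 1).choose (2 * q + 2) : ℚ) =
        (k + q + 1).choose (2 * q + 1) + (k + q + 1).choose (2 * q + 2) := by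
      exact_mod_cast Nat.choose_succ_succ' (k + q + 1) (2 * q + 1)
    simp only [ballotOp, ballotDual]
    rw [show k + (q + 1) = k + q + 1 by ring, show k + 1 + (q + 1) = k + q + 1 + 1 by ring,
      show k + 2 + (q + 1) = k + q + 1 + 2 by ring, show k + 1 + q = k + q + 1 by ring,
      show 2 * (q + 1) = 2 * q + 2 by ring]
    linear_combination (-1 : ℚ) ^ (k + q + 1) * (hx2 - 2 * hx1)

theorem sum_ballot_zero_mul (g : ℕ → ℚ) {L : ℕ} (hL : 0 < L) :
    ∑ k ∈ range L, ballot 0 k * g k = g 0 := by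
  simp [ballot_zero_left, hL]

theorem sum_ballot_succ_mul (p : ℕ) (g : ℕ → ℚ) {L : ℕ} (hL : p + 1 < L) :
    ∑ k ∈ range L, ballot (p + 1) k * g k = ∑ k ∈ range L, ballot p k * ballotOp g k := by
  obtain ⟨L, rfl⟩ : ∃ L', L = L' + 1 := ⟨L - 1, by omega⟩
  simp only [ballot_succ]
  exact sum_ballotOp_mul _ _ _ (ballot_of_lt (by omega)) (ballot_of_lt (by omega))

theorem sum_ballot_mul_ballot (p q : ℕ) {L : ℕ} (hL : p < L) :
    ∑ k ∈ range L, ballot p k * ballot q k = catalan (p + q) := by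
  induction p generalizing q with
  | zero => rw [sum_ballot_zero_mul _ hL, ballot_zero_right, zero_add]
  | succ p ih =>
    simp only [sum_ballot_succ_mul p _ hL, ← ballot_succ]
    rw [ih (q + 1) (by omega), add_right_comm, add_assoc]

theorem sum_ballot_mul_ballotDual (p q : ℕ) {L : ℕ} (hL : p < L) :
    ∑ k ∈ range L, ballot p k * ballotDual q k = if p = q then 1 else 0 := by
  induction p generalizing q with
  | zero => simp only [sum_ballot_zero_mul _ hL, ballotDual_zero_right, eq_comm]
  | succ p ih =>
    rw [sum_ballot_succ_mul p _ hL]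
    rcases q with _ | q
    · simp [ballotOp_ballotDual_zero]
    · rw [ballotOp_ballotDual_succ, ih q (by omega)]
      simp

namespace Matrix

variable {R ι κ : Type*} [CommRing R] [Fintype ι] [Fintype κ] [DecidableEq ι] [DecidableEq κ]

theorem det_mul_det_toBlocks₁₁_of_mul_eq_one {Z W : Matrix (ι ⊕ κ) (ι ⊕ κ) R} (h : Z * W = 1) :
    Z.det * W.toBlocks₁₁.det = Z.toBlocks₂₂.det := by
  rw [← fromBlocks_toBlocks Z, ← fromBlocks_toBlocks W, fromBlocks_multiply,
    ← fromBlocks_one, fromBlocks_inj] at h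
  obtain ⟨h₁₁, -, h₂₁, -⟩ := h
  have hmul : Z * fromBlocks W.toBlocks₁₁ 0 W.toBlocks₂₁ 1 =
      fromBlocks 1 Z.toBlocks₁₂ 0 Z.toBlocks₂₂ := by
    rw [← fromBlocks_toBlocks Z, fromBlocks_multiply]
    simp [h₁₁, h₂₁]
  simpa [det_fromBlocks_zero₁₂, det_fromBlocks_zero₂₁] using congrArg det hmul

theorem det_neg_one_pow_add_add_mul {n : ℕ} (c : ℕ) (M : Matrix (Fin n) (Fin n) R) :
    (of fun i j : Fin n => (-1 : R) ^ (c + i + j) * M i j).det = (-1) ^ (c * n) * M.det := by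
  have hM : (of fun i j : Fin n => (-1 : R) ^ (c + i + j) * M i j) =
      of fun i j : Fin n =>
        (-1) ^ (c + i : ℕ) * (of fun i j : Fin n => (-1) ^ (j : ℕ) * M i j) i j := by
    ext i j
    simp [pow_add, mul_assoc]
  have hsign (i : ℕ) : (-1 : R) ^ (c + i) * (-1) ^ i = (-1) ^ c := by
    rw [pow_add, mul_assoc, ← pow_add, ← two_mul, pow_mul, neg_one_sq, one_pow, mul_one]
  rw [hM, det_mul_column, det_mul_row, ← mul_assoc, ← Finset.prod_mul_distrib]
  simp [hsign, pow_mul]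

end Matrix

theorem coe_finRotate_pow (N c : ℕ) (x : Fin N) : (((finRotate N) ^ c) x : ℕ) = (x + c) % N := by
  induction c generalizing x with
  | zero => simp [Nat.mod_eq_of_lt x.isLt]
  | succ c ih =>
    rcases N with _ | N
    · exact x.elim0
    rw [pow_succ, Equiv.Perm.mul_apply, finRotate_apply, ih, Fin.val_add, Fin.val_one',
      Nat.mod_add_mod, add_right_comm, Nat.add_mod_mod, add_assoc]

theorem sign_finRotate_pow (n m : ℕ) :
    Equiv.Perm.sign (finRotate (n + m) ^ m) = (-1) ^ (n * m) := by
  rw [map_pow, sign_finRotate, ← pow_mul]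
  rcases m with _ | m
  · simp
  · rw [show (n + (m + 1) - 1) * (m + 1) = n * (m + 1) + m * (m + 1) by
      rw [Nat.add_sub_assoc (by omega), Nat.add_sub_cancel]; ring, pow_add,
      (Nat.even_mul_succ_self m).neg_one_pow, mul_one]

open Matrix

def ballotMatrix (s m : ℕ) : Matrix (Fin m) (Fin m) ℚ := of fun i k => ballot (s + i) k

def ballotDualMatrix (N : ℕ) : Matrix (Fin N) (Fin N) ℚ := of fun k q => ballotDual q k

theorem det_ballotMatrix_zero (m : ℕ) : (ballotMatrix 0 m).det = 1 := by
  have hlower : (ballotMatrix 0 m).IsLowerTriangular := fun i k h =>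
    ballot_of_lt (by simpa using h)
  rw [det_of_isLowerTriangular _ hlower]
  simp [ballotMatrix, ballot_self]

theorem catalan_hankel_eq_ballotMatrix_mul_transpose (s m : ℕ) :
    (of fun i j : Fin m => (catalan (s + i + j) : ℚ)) =
      ballotMatrix s m * (ballotMatrix 0 m)ᵀ := by
  ext i j
  simp only [ballotMatrix, mul_apply, transpose_apply, of_apply, zero_add]
  rw [Fin.sum_univ_eq_sum_range (fun k => ballot (s + i) k * ballot j k)]
  simp_rw [mul_comm (ballot (s + i) _)]
  rw [sum_ballot_mul_ballot _ _ j.isLt, add_comm]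

theorem ballotMatrix_mul_ballotDualMatrix (N : ℕ) : ballotMatrix 0 N * ballotDualMatrix N = 1 := by
  ext p q
  simp only [ballotMatrix, ballotDualMatrix, mul_apply, of_apply, zero_add]
  rw [Fin.sum_univ_eq_sum_range (fun k => ballot p k * ballotDual q k),
    sum_ballot_mul_ballotDual _ _ p.isLt]
  simp [one_apply, Fin.val_inj]

theorem det_choose_eq_det_ballotMatrix (m n : ℕ) :
    (of fun i j : Fin n => ((m + i + j).choose (2 * j) : ℚ)).det = (ballotMatrix n m).det := by
  set e : Fin n ⊕ Fin m ≃ Fin (n + m) := finSumFinEquiv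
  set σ := finRotate (n + m) ^ m
  set Z := (ballotMatrix 0 (n + m)).submatrix e (e.trans σ)
  set W := (ballotDualMatrix (n + m)).submatrix (e.trans σ) e
  -- `e.trans σ` sends `inl i ↦ m + i` and `inr k ↦ k`, so `W.toBlocks₁₁` is the minor of `B⁻¹`
  -- on the rows `m, …, m + n - 1`.
  have hZW : Z * W = 1 := by
    rw [submatrix_mul_equiv, ballotMatrix_mul_ballotDualMatrix, submatrix_one_equiv]
  have hZ : Z.det = (-1) ^ (n * m) := by
    have : Z = ((ballotMatrix 0 (n + m)).submatrix id σ).submatrix e e := rfl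
    rw [this, det_submatrix_equiv_self, det_permute', sign_finRotate_pow, det_ballotMatrix_zero]
    simp
  have hW : W.toBlocks₁₁ =
      of fun i j : Fin n => (-1) ^ (m + i + j) * ((m + i + j).choose (2 * j) : ℚ) := by
    ext i j
    simp only [W, e, σ, toBlocks₁₁, ballotDualMatrix, ballotDual, Equiv.coe_trans, submatrix_apply,
      Function.comp_apply, finSumFinEquiv_apply_left, of_apply, coe_finRotate_pow, Fin.val_castAdd]
    rw [Nat.mod_eq_of_lt (by omega), add_comm (i : ℕ) m]
  have hZ₂₂ : Z.toBlocks₂₂ = ballotMatrix n m := by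
    ext i k
    simp only [Z, e, σ, toBlocks₂₂, ballotMatrix, zero_add, Equiv.coe_trans, submatrix_apply,
      finSumFinEquiv_apply_right, Function.comp_apply, of_apply, Fin.val_natAdd, coe_finRotate_pow]
    rw [add_right_comm, Nat.add_mod_left, Nat.mod_eq_of_lt (by omega)]
  have hsign :=
    det_neg_one_pow_add_add_mul m (of fun i j : Fin n => ((m + i + j).choose (2 * j) : ℚ))
  simp only [of_apply] at hsign
  have := det_mul_det_toBlocks₁₁_of_mul_eq_one hZW
  rwa [hZ, hW, hsign, hZ₂₂, ← mul_assoc, ← pow_add, mul_comm n m, ← two_mul, pow_mul, neg_one_sq,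
    one_pow, one_mul] at this

theorem binomial_det_eq_catalan_hankel_ratio_general (m n : ℕ) :
    Matrix.det (Matrix.of fun i j : Fin n =>
        if (j : ℕ) ≤ (i : ℕ) + m then (((i : ℕ) + j + m).choose ((i : ℕ) + m - j) : ℚ)
        else 0) =
      Matrix.det (Matrix.of fun i j : Fin m => (catalan (n + i + j) : ℚ)) /
        Matrix.det (Matrix.of fun i j : Fin m => (catalan ((i : ℕ) + j) : ℚ)) := by
  have hentry (i j : Fin n) : (if (j : ℕ) ≤ i + m then ((i + j + m : ℕ).choose (i + m - j) : ℚ)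
      else 0) = ((m + i + j).choose (2 * j) : ℚ) := by
    rw [show (i : ℕ) + j + m = i + m + j by ring, show m + (i : ℕ) + j = i + m + j by ring,
      ← ite_choose_eq_choose_two_mul, Nat.cast_ite, Nat.cast_zero]
  have hcatalan := catalan_hankel_eq_ballotMatrix_mul_transpose 0 m
  simp only [zero_add] at hcatalan
  simp only [hentry, det_choose_eq_det_ballotMatrix, catalan_hankel_eq_ballotMatrix_mul_transpose,
    hcatalan, det_mul, det_transpose, det_ballotMatrix_zero, mul_one, div_one]

theorem binomial_det_eq_catalan_hankel_ratio (m n : ℕ) (hm : 1 ≤ m) (hn : 1 ≤ n) :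
    Matrix.det (Matrix.of fun i j : Fin n =>
        if (j : ℕ) ≤ (i : ℕ) + m then (((i : ℕ) + j + m).choose ((i : ℕ) + m - j) : ℚ)
        else 0) =
      Matrix.det (Matrix.of fun i j : Fin m => (catalan (n + i + j) : ℚ)) /
        Matrix.det (Matrix.of fun i j : Fin m => (catalan ((i : ℕ) + j) : ℚ)) :=
  binomial_det_eq_catalan_hankel_ratio_general m n
end

section
/- For all integers m ≥ 1 and n ≥ 1: det(C_{n+i+j})_{i,j=0}^{m-1} / det(C_{i+j})_{i,j=0}^{m-1} = ∏_{1 ≤ i ≤ j ≤ n-1} (2m+i+j)/(i+j), where C_k denotes the k-th Catalan number. -/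
noncomputable section CatalanHankel

open Matrix

def fq (k : ℕ) : ℚ := (k.factorial : ℚ)

lemma fq_pos (k : ℕ) : 0 < fq k := by
  simp only [fq]; exact_mod_cast k.factorial_pos

lemma fq_ne (k : ℕ) : fq k ≠ 0 := (fq_pos k).ne'

lemma fq_succ (k : ℕ) : fq (k + 1) = ((k : ℚ) + 1) * fq k := by
  unfold fq
  rw [Nat.factorial_succ]
  push_cast
  ring

def gq (m j : ℕ) : ℚ := fq (2*m + 2*j) * fq j / (fq (2*m + j) * fq (2*j))

lemma gq_pos (m j : ℕ) : 0 < gq m j := by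
  unfold gq
  exact div_pos (mul_pos (fq_pos _) (fq_pos _)) (mul_pos (fq_pos _) (fq_pos _))

lemma gq_ne (m j : ℕ) : gq m j ≠ 0 := (gq_pos m j).ne'

def Pq (m n : ℕ) : ℚ := ∏ j ∈ Finset.range n, gq m j

lemma Pq_succ (m n : ℕ) : Pq m (n+1) = Pq m n * gq m n := Finset.prod_range_succ _ _

lemma Pq_pos (m n : ℕ) : 0 < Pq m n := Finset.prod_pos fun j _ => gq_pos m j

lemma Pq_ne (m n : ℕ) : Pq m n ≠ 0 := (Pq_pos m n).ne'

lemma gq_zero (m : ℕ) : gq m 0 = 1 := by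
  unfold gq
  rw [div_eq_one_iff_eq (mul_ne_zero (fq_ne _) (fq_ne _))]

/-- identity (I) -/
lemma gq_I (m n : ℕ) :
    gq (m+1) n * (((n:ℚ)+m+2)*(2*n+2*m+3)) = gq (m+1) (n+1) * ((2*(n:ℚ)+1)*((n:ℚ)+2*m+3)) := by
  have h1 := fq_ne (2*(m+1) + 2*n)
  have h2 := fq_ne n
  have h3 := fq_ne (2*(m+1) + n)
  have h4 := fq_ne (2*n)
  unfold gq
  rw [show 2*(m+1)+2*(n+1) = (2*(m+1)+2*n)+1+1 by ring,
      show 2*(m+1)+(n+1) = (2*(m+1)+n)+1 by ring,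
      show 2*(n+1) = 2*n+1+1 by ring]
  simp only [fq_succ]
  field_simp
  push_cast
  ring

lemma gq_succ_m (m j : ℕ) :
    gq (m+1) j * (((j:ℚ)+2*m+2)*((j:ℚ)+2*m+1)) = gq m j * ((2*(j:ℚ)+2*m+2)*(2*(j:ℚ)+2*m+1)) := by
  have h3 := fq_ne (2*m+j)
  have h4 := fq_ne (2*j)
  have h1 := fq_ne (2*m+2*j)
  have h2 := fq_ne j
  unfold gq
  rw [show 2*(m+1)+2*j = (2*m+2*j)+1+1 by ring, show 2*(m+1)+j = (2*m+j)+1+1 by ring]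
  simp only [fq_succ]
  field_simp
  push_cast
  ring

/-- identity (II) -/
lemma gq_II (m n : ℕ) :
    gq (m+2) n * gq m (n+2) * (((n:ℚ)+m+3)*(2*n+2*m+5)) =
      gq (m+1) n * gq (m+1) (n+2) * (((n:ℚ)+m+2)*(2*n+2*m+3)) := by
  have h1 := gq_succ_m (m+1) n
  have h2 := gq_succ_m m (n+2)
  push_cast at h1 h2
  have hX : ((n:ℚ)+2*m+4)*((n:ℚ)+2*m+3) ≠ 0 := by positivity
  apply mul_right_cancel₀ hX
  linear_combination (gq m (n+2) * (((n:ℚ)+m+3)*(2*n+2*m+5))) * h1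
    - (gq (m+1) n * (((n:ℚ)+m+2)*(2*n+2*m+3))) * h2

/-- identity (III): base case of (1) -/
lemma gq_III (m : ℕ) :
    gq m 0 * gq m 1 * (((m:ℚ)+2)*(2*m+3)) = gq (m+1) 0 * gq (m+1) 1 * ((2*(m:ℚ)+3)*((m:ℚ)+1)) := by
  have h := gq_succ_m m 1
  push_cast at h
  rw [gq_zero, gq_zero, one_mul, one_mul]
  have hX : ((2*(m:ℚ)+3)*(2*(m:ℚ)+2)) ≠ 0 := by positivity
  apply mul_right_cancel₀ hX
  linear_combination (-((2*(m:ℚ)+3)*((m:ℚ)+1))) * h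

/-- identity (1) -/
lemma Pq_range_two (M : ℕ) : Pq M 2 = gq M 0 * gq M 1 := by
  unfold Pq
  rw [Finset.prod_range_succ, Finset.prod_range_one]

lemma Pq_one (m : ℕ) : ∀ n : ℕ,
    Pq (m+2) n * Pq m (n+2) * (((n:ℚ)+m+2)*(2*n+2*m+3)) =
      Pq (m+1) n * Pq (m+1) (n+2) * ((2*(m:ℚ)+3)*((m:ℚ)+1)) := by
  intro n
  induction n with
  | zero =>
    rw [show (0+2 : ℕ) = 2 from rfl, Pq_range_two, Pq_range_two,
        show Pq (m+2) 0 = 1 from Finset.prod_range_zero _,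
        show Pq (m+1) 0 = 1 from Finset.prod_range_zero _]
    push_cast
    linear_combination gq_III m
  | succ n ih =>
    rw [show n+1+2 = (n+2)+1 by ring, Pq_succ (m+2) n, Pq_succ m (n+2),
        Pq_succ (m+1) n, Pq_succ (m+1) (n+2)]
    push_cast
    linear_combination (Pq (m+2) n * Pq m (n+2)) * gq_II m n
      + (gq (m+1) n * gq (m+1) (n+2)) * ih

/-- identity (2) -/
lemma Pq_two (m n : ℕ) :
    Pq (m+1) (n+1)^2 * (((n:ℚ)+m+2)*(2*n+2*m+3)) =
      Pq (m+1) n * Pq (m+1) (n+2) * ((2*(n:ℚ)+1)*((n:ℚ)+2*m+3)) := by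
  rw [show n+2 = (n+1)+1 by ring, Pq_succ (m+1) (n+1), Pq_succ (m+1) n]
  push_cast
  linear_combination (Pq (m+1) n^2 * gq (m+1) n) * gq_I m n

/-- Desnanot–Jacobi identity for the product side -/
lemma Pq_dj (m n : ℕ) :
    Pq (m+2) n * Pq m (n+2) + Pq (m+1) (n+1)^2 = Pq (m+1) n * Pq (m+1) (n+2) := by
  have hA : (((n:ℚ)+m+2)*(2*n+2*m+3)) ≠ 0 := by positivity
  apply mul_right_cancel₀ hA
  linear_combination Pq_one m n + Pq_two m n

lemma gq_m_zero (n : ℕ) : gq 0 n = 1 := by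
  unfold gq
  rw [div_eq_one_iff_eq (mul_ne_zero (fq_ne _) (fq_ne _))]
  norm_num
  ring

lemma Pq_m_zero (n : ℕ) : Pq 0 n = 1 := by
  unfold Pq
  rw [Finset.prod_congr rfl fun j _ => gq_m_zero j, Finset.prod_const_one]

lemma catalan_ratio (n : ℕ) :
    (catalan (n+1) : ℚ) * ((n:ℚ)+2) = (catalan n : ℚ) * (2*(2*(n:ℚ)+1)) := by
  have h1 := succ_mul_catalan_eq_centralBinom (n+1)
  have h2 := Nat.succ_mul_centralBinom_succ n
  have h3 := succ_mul_catalan_eq_centralBinom n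
  have q1 : ((n:ℚ)+1+1) * (catalan (n+1) : ℚ) = (Nat.centralBinom (n+1) : ℚ) := by
    exact_mod_cast congrArg (Nat.cast : ℕ → ℚ) h1
  have q2 : ((n:ℚ)+1) * (Nat.centralBinom (n+1) : ℚ) = 2*(2*(n:ℚ)+1) * (Nat.centralBinom n : ℚ) := by
    exact_mod_cast congrArg (Nat.cast : ℕ → ℚ) h2
  have q3 : ((n:ℚ)+1) * (catalan n : ℚ) = (Nat.centralBinom n : ℚ) := by
    exact_mod_cast congrArg (Nat.cast : ℕ → ℚ) h3
  have hn1 : ((n:ℚ)+1) ≠ 0 := by positivity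
  apply mul_right_cancel₀ hn1
  linear_combination ((n:ℚ)+1) * q1 + q2 - 2*(2*(n:ℚ)+1) * q3

lemma Pq_one_m (n : ℕ) : Pq 1 n = (catalan n : ℚ) := by
  induction n with
  | zero => simp [Pq, catalan_zero]
  | succ n ih =>
    rw [Pq_succ, ih]
    have hs := gq_succ_m 0 n
    rw [gq_m_zero] at hs
    push_cast at hs
    have hX : (((n:ℚ)+2)*((n:ℚ)+1)) ≠ 0 := by positivity
    apply mul_right_cancel₀ hX
    linear_combination (catalan n : ℚ) * hs - ((n:ℚ)+1) * catalan_ratio n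

lemma prod_consec (c : ℕ) : ∀ j : ℕ,
    fq c * ∏ i ∈ Finset.Icc 1 j, ((c + i : ℕ) : ℚ) = fq (c + j) := by
  intro j
  induction j with
  | zero => simp
  | succ j ih =>
    rw [Finset.prod_Icc_succ_top (by omega : 1 ≤ j+1),
        show c + (j+1) = (c+j)+1 by ring, fq_succ]
    push_cast at ih ⊢
    linear_combination ((c:ℚ) + (j:ℚ) + 1) * ih

lemma inner_eval (m j : ℕ) :
    (∏ i ∈ Finset.Icc 1 j, ((2 * (m:ℚ) + i + j) / ((i:ℚ) + j))) = gq m j := by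
  rw [Finset.prod_div_distrib]
  have hnum : (∏ i ∈ Finset.Icc 1 j, (2 * (m:ℚ) + i + j))
      = ∏ i ∈ Finset.Icc 1 j, (((2*m+j) + i : ℕ) : ℚ) := by
    refine Finset.prod_congr rfl fun i _ => ?_
    push_cast; ring
  have hden : (∏ i ∈ Finset.Icc 1 j, ((i:ℚ) + j))
      = ∏ i ∈ Finset.Icc 1 j, ((j + i : ℕ) : ℚ) := by
    refine Finset.prod_congr rfl fun i _ => ?_
    push_cast; ring
  have h1 := prod_consec (2*m+j) j
  have h2 := prod_consec j j
  rw [show 2*m+j+j = 2*m+2*j by ring] at h1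
  rw [show j+j = 2*j by ring] at h2
  have e1 : (∏ i ∈ Finset.Icc 1 j, ((2*m+j + i : ℕ) : ℚ)) = fq (2*m+2*j) / fq (2*m+j) := by
    rw [eq_div_iff (fq_ne _)]
    linear_combination h1
  have e2 : (∏ i ∈ Finset.Icc 1 j, ((j + i : ℕ) : ℚ)) = fq (2*j) / fq j := by
    rw [eq_div_iff (fq_ne _)]
    linear_combination h2
  rw [hnum, hden, e1, e2]
  unfold gq
  have n1 := fq_ne (2*m+j)
  have n2 := fq_ne j
  have n3 := fq_ne (2*j)
  have n4 := fq_ne (2*m+2*j)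
  field_simp

lemma icc_prod_eq_Pq (m : ℕ) : ∀ k : ℕ, (∏ j ∈ Finset.Icc 1 k, gq m j) = Pq m (k+1) := by
  intro k
  induction k with
  | zero =>
    simp [Pq, Finset.prod_range_one, gq_zero]
  | succ k ih =>
    rw [Finset.prod_Icc_succ_top (by omega : 1 ≤ k+1), ih, ← Pq_succ]

/-! ### Matrix side -/

def Hk (m n : ℕ) : Matrix (Fin m) (Fin m) ℚ :=
  Matrix.of fun i j => (catalan (n + i + j) : ℚ)

/-- `inl i ↦ i+1`, `inr ↦ 0` -/
def e0 (m : ℕ) : Fin m ⊕ Fin 1 ≃ Fin (m+1) where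
  toFun x := Sum.elim (fun i : Fin m => (⟨(i:ℕ)+1, by have := i.isLt; omega⟩ : Fin (m+1)))
    (fun _ => (⟨0, by omega⟩ : Fin (m+1))) x
  invFun k := if h : (k:ℕ) = 0 then Sum.inr 0
    else Sum.inl ⟨(k:ℕ)-1, by have := k.isLt; omega⟩
  left_inv := by
    rintro (i | b)
    · dsimp only [Sum.elim_inl]
      rw [dif_neg (by omega)]
      congr 1
    · dsimp only [Sum.elim_inr]
      rw [dif_pos rfl]
      exact congrArg Sum.inr (Subsingleton.elim _ _)
  right_inv := by
    intro k
    dsimp only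
    split_ifs with h
    · dsimp only [Sum.elim_inr]
      exact Fin.ext (by simpa using h.symm)
    · dsimp only [Sum.elim_inl]
      exact Fin.ext (by have := k.isLt; simp; omega)

lemma e0_inl (m : ℕ) (i : Fin m) : ((e0 m (Sum.inl i) : Fin (m+1)) : ℕ) = (i:ℕ)+1 := rfl
lemma e0_inr (m : ℕ) (b : Fin 1) : ((e0 m (Sum.inr b) : Fin (m+1)) : ℕ) = 0 := rfl

/-- `inl i ↦ i`, `inr ↦ m` -/
def e1 (m : ℕ) : Fin m ⊕ Fin 1 ≃ Fin (m+1) where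
  toFun x := Sum.elim (fun i : Fin m => (⟨(i:ℕ), by have := i.isLt; omega⟩ : Fin (m+1)))
    (fun _ => (⟨m, by omega⟩ : Fin (m+1))) x
  invFun k := if h : (k:ℕ) = m then Sum.inr 0
    else Sum.inl ⟨(k:ℕ), by have := k.isLt; omega⟩
  left_inv := by
    rintro (i | b)
    · dsimp only [Sum.elim_inl]
      rw [dif_neg (by have := i.isLt; omega)]
    · dsimp only [Sum.elim_inr]
      rw [dif_pos rfl]
      exact congrArg Sum.inr (Subsingleton.elim _ _)
  right_inv := by
    intro k
    dsimp only
    split_ifs with h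
    · dsimp only [Sum.elim_inr]
      exact Fin.ext (by simpa using h.symm)
    · dsimp only [Sum.elim_inl]

lemma e1_inl (m : ℕ) (i : Fin m) : ((e1 m (Sum.inl i) : Fin (m+1)) : ℕ) = (i:ℕ) := rfl
lemma e1_inr (m : ℕ) (b : Fin 1) : ((e1 m (Sum.inr b) : Fin (m+1)) : ℕ) = m := rfl

/-- `inl i ↦ i+1`, `inr 0 ↦ 0`, `inr 1 ↦ m+1` -/
def e2 (m : ℕ) : Fin m ⊕ Fin 2 ≃ Fin (m+2) where
  toFun x := Sum.elim (fun i : Fin m => (⟨(i:ℕ)+1, by have := i.isLt; omega⟩ : Fin (m+2)))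
    (fun b : Fin 2 => if (b:ℕ) = 0 then (⟨0, by omega⟩ : Fin (m+2)) else ⟨m+1, by omega⟩) x
  invFun k := if h0 : (k:ℕ) = 0 then Sum.inr 0 else
    if h : (k:ℕ) = m+1 then Sum.inr 1 else Sum.inl ⟨(k:ℕ)-1, by have := k.isLt; omega⟩
  left_inv := by
    rintro (i | b)
    · dsimp only [Sum.elim_inl]
      rw [dif_neg (by omega), dif_neg (by have := i.isLt; omega)]
      congr 1
    · dsimp only [Sum.elim_inr]
      rcases b with ⟨bv, hb⟩
      interval_cases bv
      · rw [if_pos rfl]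
        dsimp only
        rw [dif_pos rfl]
        exact congrArg Sum.inr (Fin.ext rfl)
      · rw [if_neg (by norm_num)]
        dsimp only
        rw [dif_neg (by simp), dif_pos rfl]
        exact congrArg Sum.inr (Fin.ext rfl)
  right_inv := by
    intro k
    dsimp only
    split_ifs with h h2
    · dsimp only [Sum.elim_inr]
      rw [if_pos (show ((0 : Fin 2):ℕ) = 0 from rfl)]
      exact Fin.ext (by simpa using h.symm)
    · dsimp only [Sum.elim_inr]
      rw [if_neg (show ¬ ((1 : Fin 2):ℕ) = 0 by norm_num)]
      exact Fin.ext (by simpa using h2.symm)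
    · dsimp only [Sum.elim_inl]
      exact Fin.ext (by have := k.isLt; simp; omega)

lemma e2_inl (m : ℕ) (i : Fin m) : ((e2 m (Sum.inl i) : Fin (m+2)) : ℕ) = (i:ℕ)+1 := rfl
lemma e2_inr0 (m : ℕ) : ((e2 m (Sum.inr 0) : Fin (m+2)) : ℕ) = 0 := rfl
lemma e2_inr1 (m : ℕ) : ((e2 m (Sum.inr 1) : Fin (m+2)) : ℕ) = m+1 := rfl

def wB (m : ℕ) : Fin 2 → ℕ := fun b => if (b:ℕ) = 0 then 0 else m+1

lemma wB0 (m : ℕ) : wB m 0 = 0 := rfl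
lemma wB1 (m : ℕ) : wB m 1 = m+1 := rfl

lemma e2_inr_val (m : ℕ) (b : Fin 2) : ((e2 m (Sum.inr b) : Fin (m+2)) : ℕ) = wB m b := by
  unfold e2 wB
  dsimp only [Equiv.coe_fn_mk, Sum.elim_inr]
  split_ifs <;> rfl

def Bm (m n : ℕ) : Matrix (Fin m) (Fin 2) ℚ :=
  Matrix.of fun i b => (catalan (n + ((i:ℕ)+1) + wB m b) : ℚ)

def Cm (m n : ℕ) : Matrix (Fin 2) (Fin m) ℚ :=
  Matrix.of fun b j => (catalan (n + wB m b + ((j:ℕ)+1)) : ℚ)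

def Wm (m n : ℕ) : Matrix (Fin 2) (Fin 2) ℚ :=
  Matrix.of fun a b => (catalan (n + wB m a + wB m b) : ℚ)

def Nm (m n : ℕ) (a b : Fin 2) : Matrix (Fin m ⊕ Fin 1) (Fin m ⊕ Fin 1) ℚ :=
  Matrix.fromBlocks (Hk m (n+2)) (Matrix.of fun i _ => Bm m n i b)
    (Matrix.of fun _ j => Cm m n a j) (Matrix.of fun _ _ => Wm m n a b)

lemma G_eq (m n : ℕ) :
    Matrix.fromBlocks (Hk m (n+2)) (Bm m n) (Cm m n) (Wm m n)
      = (Hk (m+2) n).submatrix (e2 m) (e2 m) := by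
  ext x y
  rcases x with i | a <;> rcases y with j | b <;>
    simp only [Matrix.fromBlocks_apply₁₁, Matrix.fromBlocks_apply₁₂,
      Matrix.fromBlocks_apply₂₁, Matrix.fromBlocks_apply₂₂,
      Matrix.submatrix_apply, Hk, Bm, Cm, Wm, Matrix.of_apply] <;>
    exact congrArg (fun t => ((catalan t : ℕ) : ℚ)) (by
      (try simp only [e0_inl, e0_inr, e1_inl, e1_inr, e2_inl, e2_inr_val, wB0, wB1])
      all_goals omega)

lemma N00_eq (m n : ℕ) : Nm m n 0 0 = (Hk (m+1) n).submatrix (e0 m) (e0 m) := by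
  ext x y
  rcases x with i | a <;> rcases y with j | b <;>
    simp only [Nm, Matrix.fromBlocks_apply₁₁, Matrix.fromBlocks_apply₁₂,
      Matrix.fromBlocks_apply₂₁, Matrix.fromBlocks_apply₂₂,
      Matrix.submatrix_apply, Hk, Bm, Cm, Wm, Matrix.of_apply, wB0] <;>
    exact congrArg (fun t => ((catalan t : ℕ) : ℚ)) (by
      (try simp only [e0_inl, e0_inr, e1_inl, e1_inr, e2_inl, e2_inr_val, wB0, wB1])
      all_goals omega)

lemma N11_eq (m n : ℕ) : Nm m n 1 1 = (Hk (m+1) (n+2)).submatrix (e1 m) (e1 m) := by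
  ext x y
  rcases x with i | a <;> rcases y with j | b <;>
    simp only [Nm, Matrix.fromBlocks_apply₁₁, Matrix.fromBlocks_apply₁₂,
      Matrix.fromBlocks_apply₂₁, Matrix.fromBlocks_apply₂₂,
      Matrix.submatrix_apply, Hk, Bm, Cm, Wm, Matrix.of_apply, wB1] <;>
    exact congrArg (fun t => ((catalan t : ℕ) : ℚ)) (by
      (try simp only [e0_inl, e0_inr, e1_inl, e1_inr, e2_inl, e2_inr_val, wB0, wB1])
      all_goals omega)

lemma N01_eq (m n : ℕ) : Nm m n 0 1 = (Hk (m+1) (n+1)).submatrix (e0 m) (e1 m) := by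
  ext x y
  rcases x with i | a <;> rcases y with j | b <;>
    simp only [Nm, Matrix.fromBlocks_apply₁₁, Matrix.fromBlocks_apply₁₂,
      Matrix.fromBlocks_apply₂₁, Matrix.fromBlocks_apply₂₂,
      Matrix.submatrix_apply, Hk, Bm, Cm, Wm, Matrix.of_apply, wB0, wB1] <;>
    exact congrArg (fun t => ((catalan t : ℕ) : ℚ)) (by
      (try simp only [e0_inl, e0_inr, e1_inl, e1_inr, e2_inl, e2_inr_val, wB0, wB1])
      all_goals omega)

lemma N10_eq (m n : ℕ) :
    Nm m n 1 0 = (Matrix.transpose (Hk (m+1) (n+1))).submatrix (e1 m) (e0 m) := by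
  ext x y
  rcases x with i | a <;> rcases y with j | b <;>
    simp only [Nm, Matrix.fromBlocks_apply₁₁, Matrix.fromBlocks_apply₁₂,
      Matrix.fromBlocks_apply₂₁, Matrix.fromBlocks_apply₂₂,
      Matrix.submatrix_apply, Matrix.transpose_apply, Hk, Bm, Cm, Wm,
      Matrix.of_apply, wB0, wB1] <;>
    exact congrArg (fun t => ((catalan t : ℕ) : ℚ)) (by
      (try simp only [e0_inl, e0_inr, e1_inl, e1_inr, e2_inl, e2_inr_val, wB0, wB1])
      all_goals omega)

lemma det_submatrix_pair {k : ℕ} (A : Matrix (Fin k) (Fin k) ℚ) {β : Type}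
    [Fintype β] [DecidableEq β] (f g : β ≃ Fin k) :
    (A.submatrix f g).det
      = ((Equiv.Perm.sign (f.trans g.symm) : ℤ) : ℚ) * A.det := by
  have h : A.submatrix f g = (A.submatrix g g).submatrix (f.trans g.symm : β ≃ β) id := by
    ext x y
    simp [Matrix.submatrix_apply, Equiv.apply_symm_apply]
  rw [h, Matrix.det_permute, Matrix.det_submatrix_equiv_self]

lemma Nm_det (m n : ℕ) [Invertible (Hk m (n+2))] (a b : Fin 2) :
    (Nm m n a b).det
      = (Hk m (n+2)).det * (Wm m n - Cm m n * ⅟(Hk m (n+2)) * Bm m n) a b := by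
  rw [Nm, Matrix.det_fromBlocks₁₁]
  congr 1
  rw [Matrix.det_fin_one]
  simp [Matrix.sub_apply, Matrix.mul_apply, Matrix.of_apply]

lemma dj (m n : ℕ) (hE : (Hk m (n+2)).det ≠ 0) :
    (Hk (m+2) n).det * (Hk m (n+2)).det
      = (Hk (m+1) n).det * (Hk (m+1) (n+2)).det - (Hk (m+1) (n+1)).det ^ 2 := by
  haveI : Invertible (Hk m (n+2)) :=
    (Hk m (n+2)).invertibleOfIsUnitDet (isUnit_iff_ne_zero.mpr hE)
  set T := Wm m n - Cm m n * ⅟(Hk m (n+2)) * Bm m n with hT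
  have hG : (Hk (m+2) n).det
      = (Hk m (n+2)).det * (T 0 0 * T 1 1 - T 0 1 * T 1 0) := by
    rw [← Matrix.det_submatrix_equiv_self (e2 m) (Hk (m+2) n), ← G_eq,
      Matrix.det_fromBlocks₁₁, ← hT, Matrix.det_fin_two]
  have h00 : (Hk m (n+2)).det * T 0 0 = (Hk (m+1) n).det := by
    rw [hT, ← Nm_det m n 0 0, N00_eq, Matrix.det_submatrix_equiv_self]
  have h11 : (Hk m (n+2)).det * T 1 1 = (Hk (m+1) (n+2)).det := by
    rw [hT, ← Nm_det m n 1 1, N11_eq, Matrix.det_submatrix_equiv_self]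
  have h01 : (Hk m (n+2)).det * T 0 1
      = ((Equiv.Perm.sign ((e0 m).trans (e1 m).symm) : ℤ) : ℚ) * (Hk (m+1) (n+1)).det := by
    rw [hT, ← Nm_det m n 0 1, N01_eq, det_submatrix_pair]
  have h10 : (Hk m (n+2)).det * T 1 0
      = ((Equiv.Perm.sign ((e1 m).trans (e0 m).symm) : ℤ) : ℚ) * (Hk (m+1) (n+1)).det := by
    rw [hT, ← Nm_det m n 1 0, N10_eq, det_submatrix_pair, Matrix.det_transpose]
  have hsign : ((Equiv.Perm.sign ((e0 m).trans (e1 m).symm) : ℤ) : ℚ)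
      * ((Equiv.Perm.sign ((e1 m).trans (e0 m).symm) : ℤ) : ℚ) = 1 := by
    have he : (e1 m).trans (e0 m).symm = ((e0 m).trans (e1 m).symm)⁻¹ :=
      Equiv.ext fun x => rfl
    rw [he, Equiv.Perm.sign_inv]
    rcases Int.units_eq_one_or (Equiv.Perm.sign ((e0 m).trans (e1 m).symm)) with h | h <;>
      rw [h] <;> norm_num
  have key : (Hk (m+2) n).det * (Hk m (n+2)).det
      = ((Hk m (n+2)).det * T 0 0) * ((Hk m (n+2)).det * T 1 1)
        - ((Hk m (n+2)).det * T 0 1) * ((Hk m (n+2)).det * T 1 0) := by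
    rw [hG]; ring
  rw [key, h00, h11, h01, h10]
  linear_combination (-(Hk (m+1) (n+1)).det^2) * hsign

lemma D_eq_P : ∀ m n : ℕ, (Hk m n).det = Pq m n := by
  intro m
  induction m using Nat.strong_induction_on with
  | _ m ih =>
    rcases m with _ | _ | k
    · intro n
      rw [show (Hk 0 n).det = 1 from Matrix.det_fin_zero, Pq_m_zero]
    · intro n
      rw [Matrix.det_fin_one, Pq_one_m]
      show (catalan (n+0+0) : ℚ) = (catalan n : ℚ)
      norm_num
    · intro n
      have h1 := ih (k+1) (by omega)
      have h0 := ih k (by omega)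
      have hE : (Hk k (n+2)).det ≠ 0 := by rw [h0]; exact Pq_ne _ _
      have hdj := dj k n hE
      rw [h0, h1, h1, h1] at hdj
      show (Hk (k+2) n).det = Pq (k+2) n
      apply mul_right_cancel₀ (Pq_ne k (n+2))
      rw [hdj]
      linear_combination - Pq_dj k n

end CatalanHankel

theorem catalan_hankel_ratio_product (m n : ℕ) (hm : 1 ≤ m) (hn : 1 ≤ n) :
    Matrix.det (Matrix.of fun i j : Fin m => (catalan (n + i + j) : ℚ)) /
        Matrix.det (Matrix.of fun i j : Fin m => (catalan ((i : ℕ) + j) : ℚ)) =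
      ∏ j ∈ Finset.Icc 1 (n - 1), ∏ i ∈ Finset.Icc 1 j,
        ((2 * m + i + j : ℚ) / (i + j : ℚ)) := by
  have hden : (Matrix.of fun i j : Fin m => (catalan ((i : ℕ) + j) : ℚ)) = Hk m 0 := by
    ext i j
    show (catalan ((i:ℕ) + j) : ℚ) = (catalan (0 + (i:ℕ) + j) : ℚ)
    rw [Nat.zero_add]
  have hnum : (Matrix.of fun i j : Fin m => (catalan (n + i + j) : ℚ)) = Hk m n := rfl
  rw [hnum, hden, D_eq_P, D_eq_P]
  rw [show Pq m 0 = 1 from Finset.prod_range_zero _, div_one]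
  obtain ⟨k, rfl⟩ : ∃ k, n = k + 1 := ⟨n - 1, by omega⟩
  rw [show k+1-1 = k from rfl]
  rw [← icc_prod_eq_Pq m k]
  exact Finset.prod_congr rfl fun j _ => (inner_eval m j).symm
end

section
/- The Hankel determinant of Catalan numbers satisfies det(C_{i+j})_{i,j=0}^{m-1} = 1 for all m ≥ 1, and the once-shifted Hankel determinant satisfies det(C_{1+i+j})_{i,j=0}^{m-1} = 1 for all m ≥ 1. -/
open Finset

private def W (a b c j : ℕ) : ℤ := ((a.choose j : ℕ) : ℤ) * ((b.choose (c - j) : ℕ) : ℤ)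

private def gE (n k : ℕ) : ℤ := (((2*n).choose (n-k) : ℕ) : ℤ) - (((2*n).choose (n+k+1) : ℕ) : ℤ)

private def gO (n k : ℕ) : ℤ := (((2*n+1).choose (n-k) : ℕ) : ℤ) - (((2*n+1).choose (n+k+2) : ℕ) : ℤ)

private lemma vand (a b c K : ℕ) (hac : a ≤ c) (hK : a < K) :
    ∑ j ∈ Finset.range K, W a b c j = ((a + b).choose c : ℤ) := by
  have hzero : ∀ j, a < j → W a b c j = 0 := by
    intro j hj
    unfold W
    rw [Nat.choose_eq_zero_of_lt hj]
    simp
  have hpad : ∀ K₁ K₂ : ℕ, a < K₁ → K₁ ≤ K₂ →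
      ∑ j ∈ Finset.range K₁, W a b c j = ∑ j ∈ Finset.range K₂, W a b c j := by
    intro K₁ K₂ h1 h12
    apply Finset.sum_subset (Finset.range_subset_range.2 h12)
    intro j _ hj
    simp only [Finset.mem_range, not_lt] at hj
    exact hzero j (lt_of_lt_of_le h1 hj)
  have h1 : ∑ j ∈ Finset.range K, W a b c j = ∑ j ∈ Finset.range (c + 1), W a b c j := by
    rw [hpad K (max K (c+1)) hK (le_max_left _ _),
      hpad (c+1) (max K (c+1)) (by omega) (le_max_right _ _)]
  rw [h1]
  have h2 := Nat.add_choose_eq a b c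
  rw [Finset.Nat.sum_antidiagonal_eq_sum_range_succ_mk] at h2
  rw [h2]
  unfold W
  push_cast
  ring

private lemma catalan_eq (N : ℕ) :
    (((2*N).choose N : ℕ) : ℤ) - (((2*N).choose (N+1) : ℕ) : ℤ) = catalan N := by
  have h1 : (N + 1) * catalan N = (2*N).choose N := by
    rw [← Nat.centralBinom_eq_two_mul_choose]
    exact succ_mul_catalan_eq_centralBinom N
  have h2 := Nat.choose_succ_right_eq (2*N) N
  rw [show 2*N - N = N from by omega] at h2
  have hN : ((N:ℤ)+1) ≠ 0 := by positivity
  have h1' : ((N:ℤ)+1) * (catalan N : ℤ) = (((2*N).choose N : ℕ) : ℤ) := by exact_mod_cast h1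
  have h2' : (((2*N).choose (N+1) : ℕ) : ℤ) * ((N:ℤ)+1)
      = (((2*N).choose N : ℕ) : ℤ) * (N : ℤ) := by exact_mod_cast h2
  refine mul_left_cancel₀ hN ?_
  linear_combination -h1' - h2'

private lemma sum_split (f : ℕ → ℤ) (p q : ℕ) :
    ∑ j ∈ Finset.range (p + q), f j
      = (∑ k ∈ Finset.range p, f k) + ∑ k ∈ Finset.range q, f (p + k) := by
  rw [← Finset.sum_range_add_sum_Ico f (show p ≤ p + q by omega),
      Finset.sum_Ico_eq_sum_range]
  simp

private lemma key_even_le (n m : ℕ) (hnm : n ≤ m) :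
    ∑ k ∈ Finset.range (n+1), gE n k * gE m k = catalan (n+m) := by
  have hterm : ∀ k ∈ Finset.range (n+1),
      gE n k * gE m k =
        (W (2*n) (2*m) (n+m) (n-k) + W (2*n) (2*m) (n+m) (n+1+k))
        - (W (2*n) (2*m) (n+m+1) (n-k) + W (2*n) (2*m) (n+m+1) (n+1+k)) := by
    intro k hk
    simp only [Finset.mem_range] at hk
    have hkn : k ≤ n := by omega
    by_cases hkm : k + 1 ≤ m
    · unfold gE W
      rw [show n+m - (n-k) = m + k from by omega,
          show n+m + 1 - (n-k) = m + k + 1 from by omega,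
          show n+m + 1 - (n+1+k) = m - k from by omega,
          show n+m - (n+1+k) = m - (k+1) from by omega]
      have e2 : (2*m).choose (m+k) = (2*m).choose (m-k) := by
        have h := Nat.choose_symm (show m+k ≤ 2*m by omega)
        rw [show 2*m - (m+k) = m - k from by omega] at h
        exact h.symm
      have e4 : (2*m).choose (m - (k+1)) = (2*m).choose (m+k+1) := by
        have h := Nat.choose_symm (show m+k+1 ≤ 2*m by omega)
        rw [show 2*m - (m+k+1) = m - (k+1) from by omega] at h
        exact h
      rw [e2, e4, show n+1+k = n+k+1 from by omega]
      ring
    · -- boundary case k = n = m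
      unfold gE W
      rw [show n - k = 0 from by omega,
          show m - k = 0 from by omega,
          show n + k + 1 = 2*n+1 from by omega,
          show m + k + 1 = 2*m+1 from by omega,
          show n + 1 + k = 2*n+1 from by omega]
      rw [show n + m - 0 = 2*m from by omega,
          show n + m + 1 - 0 = 2*m+1 from by omega,
          show n + m - (2*n+1) = 0 from by omega,
          show n + m + 1 - (2*n+1) = 0 from by omega]
      rw [Nat.choose_eq_zero_of_lt (show 2*n < 2*n+1 from by omega),
          Nat.choose_eq_zero_of_lt (show 2*m < 2*m+1 from by omega)]
      simp
  rw [Finset.sum_congr rfl hterm]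
  rw [Finset.sum_sub_distrib, Finset.sum_add_distrib, Finset.sum_add_distrib]
  have hrefl : ∀ (f : ℕ → ℤ), ∑ k ∈ Finset.range (n+1), f (n-k)
      = ∑ j ∈ Finset.range (n+1), f j := by
    intro f
    rw [← Finset.sum_range_reflect f (n+1)]
    apply Finset.sum_congr rfl
    intro k hk
    simp only [Finset.mem_range] at hk
    rw [show n + 1 - 1 - k = n - k from by omega]
  have hsum : ∀ c : ℕ, (∑ k ∈ Finset.range (n+1), W (2*n) (2*m) c (n-k))
      + (∑ k ∈ Finset.range (n+1), W (2*n) (2*m) c (n+1+k))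
      = ∑ j ∈ Finset.range (2*n+2), W (2*n) (2*m) c j := by
    intro c
    rw [hrefl (fun j => W (2*n) (2*m) c j),
       show 2*n+2 = (n+1)+(n+1) from by ring]
    exact (sum_split (fun j => W (2*n) (2*m) c j) (n+1) (n+1)).symm
  rw [show ((∑ k ∈ Finset.range (n+1), W (2*n) (2*m) (n+m) (n-k))
      + ∑ k ∈ Finset.range (n+1), W (2*n) (2*m) (n+m) (n+1+k))
      - ((∑ k ∈ Finset.range (n+1), W (2*n) (2*m) (n+m+1) (n-k))
      + ∑ k ∈ Finset.range (n+1), W (2*n) (2*m) (n+m+1) (n+1+k))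
      = (∑ j ∈ Finset.range (2*n+2), W (2*n) (2*m) (n+m) j)
      - ∑ j ∈ Finset.range (2*n+2), W (2*n) (2*m) (n+m+1) j from by
    rw [hsum (n+m), hsum (n+m+1)]]
  rw [vand (2*n) (2*m) (n+m) (2*n+2) (by omega) (by omega),
      vand (2*n) (2*m) (n+m+1) (2*n+2) (by omega) (by omega)]
  rw [show 2*n+2*m = 2*(n+m) from by ring]
  exact catalan_eq (n+m)

private lemma key_odd_le (n m : ℕ) (hnm : n ≤ m) :
    ∑ k ∈ Finset.range (n+1), gO n k * gO m k = catalan (n+m+1) := by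
  have hterm : ∀ k ∈ Finset.range (n+1),
      gO n k * gO m k =
        (W (2*n+1) (2*m+1) (n+m+1) (n-k) + W (2*n+1) (2*m+1) (n+m+1) (n+2+k))
        - (W (2*n+1) (2*m+1) (n+m+2) (n-k) + W (2*n+1) (2*m+1) (n+m+2) (n+2+k)) := by
    intro k hk
    simp only [Finset.mem_range] at hk
    have hkn : k ≤ n := by omega
    by_cases hkm : k + 1 ≤ m
    · unfold gO W
      rw [show n+m+1 - (n-k) = m+1+k from by omega,
          show n+m+2 - (n-k) = m+k+2 from by omega,
          show n+m+2 - (n+2+k) = m - k from by omega,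
          show n+m+1 - (n+2+k) = m - (k+1) from by omega]
      have e2 : (2*m+1).choose (m+1+k) = (2*m+1).choose (m-k) := by
        have h := Nat.choose_symm (show m+1+k ≤ 2*m+1 by omega)
        rw [show 2*m+1 - (m+1+k) = m - k from by omega] at h
        exact h.symm
      have e4 : (2*m+1).choose (m - (k+1)) = (2*m+1).choose (m+k+2) := by
        have h := Nat.choose_symm (show m+k+2 ≤ 2*m+1 by omega)
        rw [show 2*m+1 - (m+k+2) = m - (k+1) from by omega] at h
        exact h
      rw [e2, e4, show n+2+k = n+k+2 from by omega]
      ring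
    · -- boundary case k = n = m
      unfold gO W
      rw [show n - k = 0 from by omega,
          show m - k = 0 from by omega,
          show n + k + 2 = 2*n+2 from by omega,
          show m + k + 2 = 2*m+2 from by omega,
          show n + 2 + k = 2*n+2 from by omega]
      rw [show n + m + 1 - 0 = 2*m+1 from by omega,
          show n + m + 2 - 0 = 2*m+2 from by omega,
          show n + m + 1 - (2*n+2) = 0 from by omega,
          show n + m + 2 - (2*n+2) = 0 from by omega]
      rw [Nat.choose_eq_zero_of_lt (show 2*n+1 < 2*n+2 from by omega),
          Nat.choose_eq_zero_of_lt (show 2*m+1 < 2*m+2 from by omega)]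
      simp
  rw [Finset.sum_congr rfl hterm]
  rw [Finset.sum_sub_distrib, Finset.sum_add_distrib, Finset.sum_add_distrib]
  have hrefl : ∀ (f : ℕ → ℤ), ∑ k ∈ Finset.range (n+1), f (n-k)
      = ∑ j ∈ Finset.range (n+1), f j := by
    intro f
    rw [← Finset.sum_range_reflect f (n+1)]
    apply Finset.sum_congr rfl
    intro k hk
    simp only [Finset.mem_range] at hk
    rw [show n + 1 - 1 - k = n - k from by omega]
  have hsum : ∀ c : ℕ, (∑ k ∈ Finset.range (n+1), W (2*n+1) (2*m+1) c (n-k))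
      + (∑ k ∈ Finset.range (n+1), W (2*n+1) (2*m+1) c (n+2+k))
      = (∑ j ∈ Finset.range (2*n+3), W (2*n+1) (2*m+1) c j)
        - W (2*n+1) (2*m+1) c (n+1) := by
    intro c
    rw [hrefl (fun j => W (2*n+1) (2*m+1) c j)]
    rw [show (2*n+3 : ℕ) = (n+1)+(n+2) from by ring]
    rw [sum_split (fun j => W (2*n+1) (2*m+1) c j) (n+1) (n+2)]
    rw [Finset.sum_range_succ' (fun k => W (2*n+1) (2*m+1) c (n+1+k)) (n+1)]
    have : ∀ k ∈ Finset.range (n+1),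
        W (2*n+1) (2*m+1) c (n+1+(k+1)) = W (2*n+1) (2*m+1) c (n+2+k) := by
      intro k _
      rw [show n+1+(k+1) = n+2+k from by omega]
    rw [Finset.sum_congr rfl this]
    rw [show n+1+0 = n+1 from by omega]
    ring
  rw [show ((∑ k ∈ Finset.range (n+1), W (2*n+1) (2*m+1) (n+m+1) (n-k))
      + ∑ k ∈ Finset.range (n+1), W (2*n+1) (2*m+1) (n+m+1) (n+2+k))
      - ((∑ k ∈ Finset.range (n+1), W (2*n+1) (2*m+1) (n+m+2) (n-k))
      + ∑ k ∈ Finset.range (n+1), W (2*n+1) (2*m+1) (n+m+2) (n+2+k))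
      = ((∑ j ∈ Finset.range (2*n+3), W (2*n+1) (2*m+1) (n+m+1) j)
        - ∑ j ∈ Finset.range (2*n+3), W (2*n+1) (2*m+1) (n+m+2) j)
        + (W (2*n+1) (2*m+1) (n+m+2) (n+1) - W (2*n+1) (2*m+1) (n+m+1) (n+1)) from by
    rw [hsum (n+m+1), hsum (n+m+2)]
    ring]
  have hmid : W (2*n+1) (2*m+1) (n+m+2) (n+1) = W (2*n+1) (2*m+1) (n+m+1) (n+1) := by
    unfold W
    rw [show n+m+2 - (n+1) = m+1 from by omega,
        show n+m+1 - (n+1) = m from by omega]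
    have h := Nat.choose_symm (show m+1 ≤ 2*m+1 by omega)
    rw [show 2*m+1 - (m+1) = m from by omega] at h
    rw [h]
  rw [hmid, sub_self, add_zero]
  rw [vand (2*n+1) (2*m+1) (n+m+1) (2*n+3) (by omega) (by omega),
      vand (2*n+1) (2*m+1) (n+m+2) (2*n+3) (by omega) (by omega)]
  rw [show 2*n+1+(2*m+1) = 2*(n+m+1) from by ring,
      show n+m+2 = (n+m+1)+1 from by ring]
  exact catalan_eq (n+m+1)

private lemma key_even (i j : ℕ) :
    ∑ k ∈ Finset.range (min i j + 1), gE i k * gE j k = catalan (i+j) := by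
  rcases le_total i j with h | h
  · rw [min_eq_left h]
    exact key_even_le i j h
  · rw [min_eq_right h]
    have : ∀ k ∈ Finset.range (j+1), gE i k * gE j k = gE j k * gE i k := by
      intro k _; ring
    rw [Finset.sum_congr rfl this, show i + j = j + i from by ring]
    exact key_even_le j i h

private lemma key_odd (i j : ℕ) :
    ∑ k ∈ Finset.range (min i j + 1), gO i k * gO j k = catalan (1+i+j) := by
  rcases le_total i j with h | h
  · rw [min_eq_left h, show 1+i+j = i+j+1 from by ring]
    exact key_odd_le i j h
  · rw [min_eq_right h]
    have : ∀ k ∈ Finset.range (j+1), gO i k * gO j k = gO j k * gO i k := by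
      intro k _; ring
    rw [Finset.sum_congr rfl this, show 1 + i + j = j + i + 1 from by ring]
    exact key_odd_le j i h

private lemma gE_diag (n : ℕ) : gE n n = 1 := by
  unfold gE
  rw [Nat.sub_self, Nat.choose_zero_right,
    Nat.choose_eq_zero_of_lt (show 2*n < n+n+1 from by omega)]
  simp

private lemma gO_diag (n : ℕ) : gO n n = 1 := by
  unfold gO
  rw [Nat.sub_self, Nat.choose_zero_right,
    Nat.choose_eq_zero_of_lt (show 2*n+1 < n+n+2 from by omega)]
  simp

private lemma hankel_det (g : ℕ → ℕ → ℤ) (hdiag : ∀ n, g n n = 1) (a : ℕ → ℤ)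
    (hkey : ∀ i j, ∑ k ∈ Finset.range (min i j + 1), g i k * g j k = a (i+j)) (m : ℕ) :
    Matrix.det (Matrix.of fun i j : Fin m => a ((i : ℕ) + j)) = 1 := by
  set L : Matrix (Fin m) (Fin m) ℤ :=
    Matrix.of (fun i k : Fin m => if (k : ℕ) ≤ i then g i k else 0) with hLdef
  have hH : (Matrix.of fun i j : Fin m => a ((i : ℕ) + j)) = L * L.transpose := by
    ext i j
    rw [Matrix.mul_apply]
    simp only [Matrix.transpose_apply, Matrix.of_apply, hLdef]
    have h1 : ∀ k : Fin m,
        (if (k : ℕ) ≤ i then g i k else 0) * (if (k : ℕ) ≤ j then g j k else 0)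
        = (fun t : ℕ => if t ≤ min (i : ℕ) j then g i t * g j t else 0) (k : ℕ) := by
      intro k
      by_cases h2 : (k : ℕ) ≤ min (i : ℕ) j
      · rw [if_pos (by omega : (k:ℕ) ≤ i), if_pos (by omega : (k:ℕ) ≤ j)]
        simp [h2]
      · simp only [h2, if_false]
        rcases (by omega : ¬ (k:ℕ) ≤ (i:ℕ) ∨ ¬ (k:ℕ) ≤ (j:ℕ)) with h3 | h3
        · rw [if_neg h3, zero_mul]
        · rw [if_neg h3, mul_zero]
    rw [Finset.sum_congr rfl (fun k _ => h1 k)]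
    rw [Fin.sum_univ_eq_sum_range
      (fun t : ℕ => if t ≤ min (i : ℕ) j then g i t * g j t else 0) m]
    have h4 : ∑ t ∈ Finset.range m, (if t ≤ min (i : ℕ) j then g i t * g j t else 0)
        = ∑ t ∈ Finset.range (min (i : ℕ) j + 1),
            (if t ≤ min (i : ℕ) j then g i t * g j t else 0) := by
      have hsub : Finset.range (min (i : ℕ) j + 1) ⊆ Finset.range m := by
        apply Finset.range_subset_range.2
        have h6 := i.isLt
        have h7 := j.isLt
        omega
      have h8 : ∀ t ∈ Finset.range m, t ∉ Finset.range (min (i : ℕ) j + 1) →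
          (if t ≤ min (i : ℕ) j then g i t * g j t else 0) = 0 := by
        intro t _ ht
        simp only [Finset.mem_range, not_lt] at ht
        rw [if_neg (by omega)]
      exact (Finset.sum_subset hsub h8).symm
    rw [h4]
    have h5 : ∀ t ∈ Finset.range (min (i : ℕ) j + 1),
        (if t ≤ min (i : ℕ) j then g i t * g j t else 0) = g i t * g j t := by
      intro t ht
      simp only [Finset.mem_range] at ht
      rw [if_pos (by omega)]
    rw [Finset.sum_congr rfl h5, hkey]
  rw [hH, Matrix.det_mul, Matrix.det_transpose]
  have hL : L.det = 1 := by
    rw [Matrix.det_of_lowerTriangular L (by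
      intro p q hpq
      have : (p : ℕ) < q := hpq
      simp only [hLdef, Matrix.of_apply]
      rw [if_neg (by omega)])]
    have : ∀ p : Fin m, L p p = 1 := by
      intro p
      simp only [hLdef, Matrix.of_apply, le_refl, if_pos]
      exact hdiag p
    rw [Finset.prod_congr rfl (fun p _ => this p)]
    simp
  rw [hL]; ring

theorem catalan_hankel_det_one (m : ℕ) (hm : 1 ≤ m) :
    Matrix.det (Matrix.of fun i j : Fin m => (catalan ((i : ℕ) + j) : ℤ)) = 1 ∧
    Matrix.det (Matrix.of fun i j : Fin m => (catalan (1 + (i : ℕ) + j) : ℤ)) = 1 := by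
  constructor
  · exact hankel_det gE gE_diag (fun N => (catalan N : ℤ)) key_even m
  · have h := hankel_det gO gO_diag (fun N => (catalan (1+N) : ℤ))
      (fun i j => by
        show ∑ k ∈ Finset.range (min i j + 1), gO i k * gO j k = (catalan (1+(i+j)) : ℤ)
        rw [show 1+(i+j) = 1+i+j from by ring]
        exact key_odd i j) m
    have he : (Matrix.of fun i j : Fin m => (catalan (1 + (i : ℕ) + j) : ℤ))
        = Matrix.of fun i j : Fin m => (catalan (1 + ((i : ℕ) + j)) : ℤ) := by
      ext i j
      simp only [Matrix.of_apply]
      rw [show 1 + ((i:ℕ) + j) = 1 + (i:ℕ) + j from by ring]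
    rw [he]
    exact h
end

section
/- Let μ be a sequence in a field and fix i ≥ 1, m ≥ 1. Suppose the Hankel determinants D_{i+m}(0,i+m) = det(μ(r+s))_{r,s=0}^{i+m-1} and D_{i+m}(1,i+m) = det(μ(1+r+s))_{r,s=0}^{i+m-2} are nonzero, and let λ be the unique scalar with D_0(0,i+m;λ) = 0, where D_0(0,i+m;λ) is the Hankel minor with column 0 deleted and λ added to the bottom-right entry. Then for every j with 0 ≤ j ≤ i+m: D_j(0,i+m;λ) = D_j(1,i+m) · D_{i+m}(0,i+m) / D_{i+m}(1,i+m), where D_j(a,b;λ) is the corresponding minor of the Hankel matrix on μ(a),...,μ(b) with column j deleted and λ added to its bottom-right entry (with no λ added when j = b). -/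
/-- `Dml μ a b j lam` : as `Dm μ a b j`, but with `lam` added to the bottom-right
entry (no `lam` added when `j = b`). -/
noncomputable def Dml {F : Type*} [Field F] (μ : ℕ → F) (a b j : ℕ) (lam : F) : F :=
  if a ≤ j ∧ j ≤ b then
    Matrix.det (Matrix.of fun r c : Fin (b - a) =>
      μ (a + (r : ℕ) + (if (c : ℕ) < j - a then (c : ℕ) else (c : ℕ) + 1)) +
        (if j ≠ b ∧ (r : ℕ) = b - a - 1 ∧ (c : ℕ) = b - a - 1 then lam else 0))
  else 0

section Aux
variable {F : Type*} [Field F]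

lemma Dm_eq (μ : ℕ → F) (a b j : ℕ) (h : a ≤ j ∧ j ≤ b) (N : ℕ) (hN : b - a = N) :
    Dm μ a b j = Matrix.det (Matrix.of fun r c : Fin N =>
      μ (a + (r : ℕ) + (if (c : ℕ) < j - a then (c : ℕ) else (c : ℕ) + 1))) := by
  subst hN; rw [Dm, if_pos h]

lemma coe_succAbove {N : ℕ} (j : Fin (N+1)) (c : Fin N) :
    ((j.succAbove c) : ℕ) = if (c:ℕ) < (j:ℕ) then (c:ℕ) else (c:ℕ)+1 := by
  simp [Fin.succAbove, Fin.lt_def]; split <;> simp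

lemma cofactor {N : ℕ} (v : Fin (N+1) → F) (C : Matrix (Fin N) (Fin (N+1)) F) :
    (Matrix.of (Fin.cons v (fun r => C r))).det
      = ∑ j : Fin (N+1), (-1)^(j:ℕ) * v j * (C.submatrix id j.succAbove).det := by
  rw [Matrix.det_succ_row_zero]
  refine Finset.sum_congr rfl fun j _ => ?_
  have h1 : (Matrix.of (Fin.cons v (fun r => C r))) 0 j = v j := by simp
  have h2 : ((Matrix.of (Fin.cons v (fun r => C r))).submatrix Fin.succ j.succAbove)
      = C.submatrix id j.succAbove := by
    funext r c; simp
  rw [h1, h2]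

lemma hankel_main (ν : ℕ → F) (k : ℕ)
    (h0 : Dm ν 0 (k+2) (k+2) ≠ 0)
    (hz : Dm ν 0 (k+2) 0 = 0) (j : Fin (k+3)) :
    Dm ν 1 (k+2) (k+2) * Dm ν 0 (k+2) (j:ℕ)
      = Dm ν 0 (k+2) (k+2) * Dm ν 1 (k+2) (j:ℕ) := by
  set A : Matrix (Fin (k+2)) (Fin (k+3)) F :=
    Matrix.of (fun r c => ν ((r:ℕ) + (c:ℕ))) with hA
  set C : Matrix (Fin (k+1)) (Fin (k+2)) F :=
    Matrix.of (fun r c => ν (1 + (r:ℕ) + (c:ℕ))) with hC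
  have hDx : ∀ p : Fin (k+3), Dm ν 0 (k+2) (p:ℕ) = (A.submatrix id p.succAbove).det := by
    intro p
    rw [Dm_eq ν 0 (k+2) (p:ℕ) ⟨Nat.zero_le _, by omega⟩ (k+2) rfl]
    congr 1; funext r c
    simp only [Matrix.of_apply, Matrix.submatrix_apply, id_eq, hA, coe_succAbove,
      Nat.sub_zero, Nat.zero_add]
  have hDy : ∀ p : Fin (k+2), Dm ν 1 (k+2) ((p:ℕ)+1) = (C.submatrix id p.succAbove).det := by
    intro p
    rw [Dm_eq ν 1 (k+2) ((p:ℕ)+1) ⟨by omega, by omega⟩ (k+1) rfl]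
    congr 1; funext r c
    simp only [Matrix.of_apply, Matrix.submatrix_apply, id_eq, hC, coe_succAbove,
      Nat.add_sub_cancel]
  have hDy0 : Dm ν 1 (k+2) 0 = 0 := by
    rw [Dm, if_neg (by omega)]
  set x : Fin (k+3) → F := fun p => (-1:F)^(p:ℕ) * Dm ν 0 (k+2) (p:ℕ) with hx
  set y : Fin (k+3) → F := fun p => (-1:F)^(p:ℕ) * Dm ν 1 (k+2) (p:ℕ) with hy
  have hAx : ∀ r, ∑ p, A r p * x p = 0 := by
    intro r
    have e : ∑ p, A r p * x p
        = (Matrix.of (Fin.cons (A r) (fun q => A q))).det := by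
      rw [cofactor]
      refine Finset.sum_congr rfl fun p _ => ?_
      simp only [hx]
      rw [hDx p]; ring
    rw [e]
    refine Matrix.det_zero_of_row_eq (i := Fin.succ r) (j := 0) (Fin.succ_ne_zero r) ?_
    funext c
    simp
  have hAy : ∀ r, ∑ p, A r p * y p = 0 := by
    intro r
    rw [Fin.sum_univ_succ]
    have h00 : A r 0 * y 0 = 0 := by
      have : y 0 = 0 := by simp [hy, hDy0]
      rw [this, mul_zero]
    rw [h00, zero_add]
    set v : Fin (k+2) → F := fun q => ν ((r:ℕ) + 1 + (q:ℕ)) with hv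
    have hsum : ∑ q : Fin (k+2), A r q.succ * y q.succ
        = - (Matrix.of (Fin.cons v (fun q => C q))).det := by
      rw [cofactor, ← Finset.sum_neg_distrib]
      refine Finset.sum_congr rfl fun q _ => ?_
      simp only [hy, Fin.val_succ]
      rw [hDy q]
      simp only [hA, Matrix.of_apply, hv, Fin.val_succ]
      have harg : (r:ℕ) + ((q:ℕ)+1) = (r:ℕ) + 1 + (q:ℕ) := by omega
      rw [harg]; ring
    rw [hsum, neg_eq_zero]
    by_cases hr : (r:ℕ) < k+1
    · refine Matrix.det_zero_of_row_eq (i := (0 : Fin (k+2)))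
        (j := (⟨(r:ℕ), hr⟩ : Fin (k+1)).succ) (Fin.succ_ne_zero _).symm ?_
      funext c
      simp only [Matrix.of_apply, Fin.cons_zero, Fin.cons_succ, hv, hC]
      congr 1
      omega
    · have hrk : (r:ℕ) = k+1 := by have := r.2; omega
      set G : Matrix (Fin (k+2)) (Fin (k+2)) F :=
        Matrix.of (fun a b : Fin (k+2) => ν (0 + (a:ℕ) + ((b:ℕ)+1))) with hG
      have hGdet : G.det = 0 := by
        rw [← hz, Dm_eq ν 0 (k+2) 0 ⟨le_refl 0, by omega⟩ (k+2) rfl]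
        congr 1
      set σ : Equiv.Perm (Fin (k+2)) := (finRotate (k+2)).symm with hσ
      have hσ0 : σ 0 = Fin.last (k+1) := by
        rw [hσ, Equiv.symm_apply_eq, finRotate_last]
      have hσs : ∀ q : Fin (k+1), σ q.succ = q.castSucc := by
        intro q
        rw [hσ, Equiv.symm_apply_eq, finRotate_succ_apply, Fin.coeSucc_eq_succ]
      have hEG : (Matrix.of (Fin.cons v (fun q => C q))) = G.submatrix σ id := by
        funext p c
        refine Fin.cases ?_ ?_ p
        · simp only [Matrix.of_apply, Fin.cons_zero, Matrix.submatrix_apply, hσ0, id_eq, hG, hv,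
            Fin.val_last]
          congr 1; omega
        · intro q
          simp only [Matrix.of_apply, Fin.cons_succ, Matrix.submatrix_apply, hσs, id_eq, hG, hC,
            Fin.coe_castSucc]
          congr 1; omega
      rw [hEG, Matrix.det_permute, hGdet, mul_zero]
  set M : Matrix (Fin (k+2)) (Fin (k+2)) F := A.submatrix id Fin.castSucc with hM
  have hMdet : M.det = Dm ν 0 (k+2) (k+2) := by
    rw [Dm_eq ν 0 (k+2) (k+2) ⟨Nat.zero_le _, le_refl _⟩ (k+2) rfl]
    congr 1; funext r c
    simp only [hM, Matrix.submatrix_apply, id_eq, hA, Matrix.of_apply, Fin.coe_castSucc,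
      Nat.sub_zero, Nat.zero_add]
    rw [if_pos c.isLt]
  set w : Fin (k+3) → F := fun p => y (Fin.last (k+2)) * x p - x (Fin.last (k+2)) * y p with hw
  have hwlast : w (Fin.last (k+2)) = 0 := by simp only [hw]; ring
  have hMw : M.mulVec (fun c => w c.castSucc) = 0 := by
    funext r
    have hsplit : ∑ p : Fin (k+3), A r p * w p
        = (∑ c : Fin (k+2), A r c.castSucc * w c.castSucc)
          + A r (Fin.last (k+2)) * w (Fin.last (k+2)) :=
      Fin.sum_univ_castSucc _
    have hAw : ∑ p : Fin (k+3), A r p * w p = 0 := by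
      have e : ∑ p : Fin (k+3), A r p * w p
          = y (Fin.last (k+2)) * ∑ p, A r p * x p
            - x (Fin.last (k+2)) * ∑ p, A r p * y p := by
        rw [Finset.mul_sum, Finset.mul_sum, ← Finset.sum_sub_distrib]
        refine Finset.sum_congr rfl fun p _ => ?_
        simp only [hw]; ring
      rw [e, hAx r, hAy r]; ring
    have hz2 : (∑ c : Fin (k+2), A r c.castSucc * w c.castSucc) = 0 := by
      rw [hwlast, mul_zero, add_zero] at hsplit
      rw [← hsplit, hAw]
    simpa [Matrix.mulVec, dotProduct, hM] using hz2
  have hwz : (fun c : Fin (k+2) => w c.castSucc) = 0 :=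
    Matrix.eq_zero_of_mulVec_eq_zero (by rw [hMdet]; exact h0) hMw
  have hwj : w j = 0 := by
    refine Fin.lastCases ?_ ?_ j
    · exact hwlast
    · intro q; exact congrFun hwz q
  rw [hw] at hwj
  simp only [hx, hy, Fin.val_last] at hwj
  have hne : ((-1:F)^(k+2) * (-1:F)^(j:ℕ)) ≠ 0 := by
    apply mul_ne_zero <;> exact pow_ne_zero _ (by norm_num)
  apply mul_left_cancel₀ hne
  linear_combination hwj


lemma Dml_eq (μ : ℕ → F) (lam : F) (a b j : ℕ) (h : a ≤ j ∧ j ≤ b) (N : ℕ) (hN : b - a = N) :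
    Dml μ a b j lam = Matrix.det (Matrix.of fun r c : Fin N =>
      μ (a + (r:ℕ) + (if (c:ℕ) < j - a then (c:ℕ) else (c:ℕ)+1)) +
        (if j ≠ b ∧ (r:ℕ) = b - a - 1 ∧ (c:ℕ) = b - a - 1 then lam else 0)) := by
  subst hN; rw [Dml, if_pos h]

lemma transfer0 (μ : ℕ → F) (lam : F) (k j : ℕ) (hj : j ≤ k+2) :
    Dml μ 0 (k+2) j lam
      = Dm (fun t => if t = 2*k+3 then μ t + lam else μ t) 0 (k+2) j := by
  rw [Dml_eq μ lam 0 (k+2) j ⟨Nat.zero_le _, hj⟩ (k+2) rfl,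
    Dm_eq _ 0 (k+2) j ⟨Nat.zero_le _, hj⟩ (k+2) rfl]
  congr 1; funext r c
  have hr := r.isLt; have hc := c.isLt
  simp only [Matrix.of_apply]
  split_ifs <;> first | rfl | (exfalso; omega) | ring1

lemma transfer1 (μ : ℕ → F) (lam : F) (k j : ℕ) :
    Dm μ 1 (k+2) j = Dm (fun t => if t = 2*k+3 then μ t + lam else μ t) 1 (k+2) j := by
  by_cases h : 1 ≤ j ∧ j ≤ k+2
  · rw [Dm_eq μ 1 (k+2) j h (k+1) rfl, Dm_eq _ 1 (k+2) j h (k+1) rfl]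
    congr 1; funext r c
    have hr := r.isLt; have hc := c.isLt
    simp only [Matrix.of_apply]
    split_ifs <;> first | rfl | (exfalso; omega)
  · rw [Dm, Dm, if_neg h, if_neg h]

lemma transfer2 (μ : ℕ → F) (lam : F) (k : ℕ) :
    Dm μ 0 (k+2) (k+2)
      = Dm (fun t => if t = 2*k+3 then μ t + lam else μ t) 0 (k+2) (k+2) := by
  rw [Dm_eq μ 0 (k+2) (k+2) ⟨Nat.zero_le _, le_refl _⟩ (k+2) rfl,
    Dm_eq _ 0 (k+2) (k+2) ⟨Nat.zero_le _, le_refl _⟩ (k+2) rfl]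
  congr 1; funext r c
  have hr := r.isLt; have hc := c.isLt
  simp only [Matrix.of_apply]
  split_ifs <;> first | rfl | (exfalso; omega)

end Aux

theorem perturbed_minor_factorization {F : Type*} [Field F] (μ : ℕ → F)
    (i m : ℕ) (hi : 1 ≤ i) (hm : 1 ≤ m)
    (h0 : Dm μ 0 (i + m) (i + m) ≠ 0)
    (h1 : Dm μ 1 (i + m) (i + m) ≠ 0)
    (lam : F) (hlam : Dml μ 0 (i + m) 0 lam = 0) :
    ∀ j : ℕ, j ≤ i + m →
      Dml μ 0 (i + m) j lam =
        Dm μ 1 (i + m) j * Dm μ 0 (i + m) (i + m) / Dm μ 1 (i + m) (i + m) := by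
  intro j hj
  obtain ⟨k, hk⟩ : ∃ k, i + m = k + 2 := ⟨i + m - 2, by omega⟩
  rw [hk] at h0 h1 hlam hj ⊢
  set ν : ℕ → F := fun t => if t = 2*k+3 then μ t + lam else μ t with hν
  have t0 : ∀ jj, jj ≤ k+2 → Dml μ 0 (k+2) jj lam = Dm ν 0 (k+2) jj :=
    fun jj h => transfer0 μ lam k jj h
  have t1 : ∀ jj, Dm μ 1 (k+2) jj = Dm ν 1 (k+2) jj := fun jj => transfer1 μ lam k jj
  have t2 : Dm μ 0 (k+2) (k+2) = Dm ν 0 (k+2) (k+2) := transfer2 μ lam k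
  have h0' : Dm ν 0 (k+2) (k+2) ≠ 0 := by rw [← t2]; exact h0
  have hz' : Dm ν 0 (k+2) 0 = 0 := by rw [← t0 0 (by omega)]; exact hlam
  have hmain : Dm ν 1 (k+2) (k+2) * Dm ν 0 (k+2) j
      = Dm ν 0 (k+2) (k+2) * Dm ν 1 (k+2) j :=
    hankel_main ν k h0' hz' ⟨j, by omega⟩
  rw [t0 j hj, eq_div_iff h1]
  linear_combination hmain + Dm ν 0 (k+2) j * t1 (k+2)
    - Dm μ 1 (k+2) j * t2 - Dm ν 0 (k+2) (k+2) * t1 j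
end

section
/- Let p_n(x) = Σ_{j=0}^n (-1)^{n-j} binomial(n+j,n-j) x^j and let L be the linear functional with L(x^n) = C_n (Catalan numbers). Then L(x^n p_n(x)) = 1 for all n ≥ 0; equivalently, Σ_{j=0}^n (-1)^{n-j} binomial(n+j,n-j) C_{n+j} = 1. -/
/-- Absorption identity for binomial coefficients over ℤ. -/
lemma absorb_int (s k : ℕ) :
    ((k : ℤ) + 1) * (s.choose (k + 1)) = ((s : ℤ) - k) * s.choose k := by
  rcases le_or_gt (k + 1) s with h | h
  · have := Nat.choose_succ_right_eq s k
    have hcast := congrArg (Nat.cast : ℕ → ℤ) this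
    push_cast [Nat.cast_sub (by omega : k ≤ s)] at hcast
    linarith
  · rcases le_or_gt s k with h2 | h2
    · rw [Nat.choose_eq_zero_of_lt (by omega : s < k + 1)]
      rcases eq_or_lt_of_le h2 with rfl | h3
      · simp
      · rw [Nat.choose_eq_zero_of_lt h3]; ring
    · omega

/-- Catalan recurrence: (s+2)·C_{s+1} = 2(2s+1)·C_s, over ℤ. -/
lemma catalan_rec (s : ℕ) :
    ((s : ℤ) + 2) * catalan (s + 1) = 2 * (2 * s + 1) * catalan s := by
  have h1 : (s + 1 + 1) * catalan (s + 1) = (s + 1).centralBinom :=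
    succ_mul_catalan_eq_centralBinom (s + 1)
  have h2 : (s + 1) * (s + 1).centralBinom = 2 * (2 * s + 1) * s.centralBinom :=
    Nat.succ_mul_centralBinom_succ s
  have h3 : (s + 1) * catalan s = s.centralBinom := succ_mul_catalan_eq_centralBinom s
  have key : (s + 1) * ((s + 2) * catalan (s + 1)) = (s + 1) * (2 * (2 * s + 1) * catalan s) := by
    calc (s + 1) * ((s + 2) * catalan (s + 1)) = (s + 1) * ((s + 1 + 1) * catalan (s + 1)) := rfl
    _ = (s + 1) * (s + 1).centralBinom := by rw [h1]
    _ = 2 * (2 * s + 1) * s.centralBinom := h2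
    _ = 2 * (2 * s + 1) * ((s + 1) * catalan s) := by rw [h3]
    _ = (s + 1) * (2 * (2 * s + 1) * catalan s) := by ring
  have := Nat.eq_of_mul_eq_mul_left (Nat.succ_pos s) key
  exact_mod_cast this

/-- The certificate function for creative telescoping. -/
noncomputable def Hc (m j : ℕ) : ℤ :=
  (-1 : ℤ) ^ (j + 1) * j * (3 * (m : ℤ) + 5 - 2 * j) *
    ((m + 1 - j).choose j : ℤ) * (catalan (m + 1 - j) : ℤ)

lemma key_identity (m i : ℕ) :
    ((m : ℤ) + 1) * ((m : ℤ) + 2) *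
      ((-1 : ℤ) ^ i * ((m + 1 - i).choose i : ℤ) * catalan (m + 1 - i)
        - (-1 : ℤ) ^ i * ((m - i).choose i : ℤ) * catalan (m - i))
      = Hc m (i + 1) - Hc m i := by
  rcases le_or_gt i m with h | h
  · obtain ⟨s, rfl⟩ : ∃ s, m = s + i := ⟨m - i, (Nat.sub_add_cancel h).symm⟩
    have e1 : s + i - i = s := by omega
    have e2 : s + i + 1 - i = s + 1 := by omega
    have e3 : s + i + 1 - (i + 1) = s := by omega
    rw [Hc, Hc, e1, e2, e3]
    rcases i with _ | k
    · have e4 : (0 : ℕ) + 1 = 1 := rfl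
      simp only [Nat.choose_zero_right, e4, Nat.choose_one_right]
      push_cast
      have hc := catalan_rec s
      linear_combination ((s : ℤ) + 1) * hc
    · rw [Nat.choose_succ_succ s k]
      have hc := catalan_rec s
      have hk := absorb_int s k
      have hi := absorb_int s (k + 1)
      push_cast at hi hk ⊢
      linear_combination
        (-1 : ℤ) ^ (k + 1) * ((s : ℤ) - (k + 1) + 1) *
            (((s.choose (k + 1) : ℤ)) + (s.choose k : ℤ)) * hc
          + (-1 : ℤ) ^ (k + 1) * (catalan s : ℤ) * (-2 * (2 * (s : ℤ) + 1)) * hk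
          + (-1 : ℤ) ^ (k + 1) * (catalan s : ℤ) *
              (-(3 * ((s : ℤ) + (k + 1)) + 3 - 2 * (k + 1))) * hi
  · have h1 : m - i = 0 := by omega
    have h2 : m + 1 - i = 0 := by omega
    have h3 : m + 1 - (i + 1) = 0 := by omega
    have hz1 : (Nat.choose 0 i) = 0 := Nat.choose_eq_zero_of_lt (by omega)
    have hz2 : (Nat.choose 0 (i + 1)) = 0 := Nat.choose_eq_zero_of_lt (by omega)
    rw [Hc, Hc, h1, h2, h3, hz1, hz2]
    push_cast
    ring

/-- The reindexed sum is constant equal to 1. -/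
lemma T_eq_one (m : ℕ) :
    ∑ i ∈ Finset.range (m + 2),
      (-1 : ℤ) ^ i * ((m - i).choose i : ℤ) * catalan (m - i) = 1 := by
  induction m with
  | zero => norm_num [Finset.sum_range_succ]
  | succ m ih =>
    set Tm := ∑ i ∈ Finset.range (m + 2),
      (-1 : ℤ) ^ i * ((m - i).choose i : ℤ) * catalan (m - i) with hTm
    have hlast : ((-1 : ℤ) ^ (m + 2) * ((m + 1 - (m + 2)).choose (m + 2) : ℤ)
        * catalan (m + 1 - (m + 2))) = 0 := by
      have : m + 1 - (m + 2) = 0 := by omega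
      rw [this, Nat.choose_eq_zero_of_lt (by omega : 0 < m + 2)]
      push_cast; ring
    have hsum : ∑ i ∈ Finset.range (m + 3),
        (-1 : ℤ) ^ i * (((m + 1) - i).choose i : ℤ) * catalan ((m + 1) - i)
        = ∑ i ∈ Finset.range (m + 2),
        (-1 : ℤ) ^ i * (((m + 1) - i).choose i : ℤ) * catalan ((m + 1) - i) := by
      rw [Finset.sum_range_succ, hlast, add_zero]
    rw [hsum]
    set Tm1 := ∑ i ∈ Finset.range (m + 2),
      (-1 : ℤ) ^ i * (((m + 1) - i).choose i : ℤ) * catalan ((m + 1) - i) with hTm1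
    have htel : ((m : ℤ) + 1) * ((m : ℤ) + 2) * (Tm1 - Tm) = 0 := by
      have : ((m : ℤ) + 1) * ((m : ℤ) + 2) * (Tm1 - Tm)
          = ∑ i ∈ Finset.range (m + 2), (Hc m (i + 1) - Hc m i) := by
        rw [hTm1, hTm, ← Finset.sum_sub_distrib, Finset.mul_sum]
        refine Finset.sum_congr rfl fun i _ => ?_
        rw [← key_identity m i]
      rw [this, Finset.sum_range_sub (fun j => Hc m j)]
      have hH0 : Hc m 0 = 0 := by rw [Hc]; push_cast; ring
      have hHtop : Hc m (m + 2) = 0 := by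
        rw [Hc]
        have : m + 1 - (m + 2) = 0 := by omega
        rw [this, Nat.choose_eq_zero_of_lt (by omega : 0 < m + 2)]
        push_cast; ring
      rw [hH0, hHtop, sub_zero]
    have hne : ((m : ℤ) + 1) * ((m : ℤ) + 2) ≠ 0 := by positivity
    have : Tm1 - Tm = 0 := by
      rcases mul_eq_zero.1 htel with h | h
      · exact absurd h hne
      · exact h
    have h4 : Tm1 = Tm := by linarith
    rw [h4]; exact ih

theorem catalan_norm_one (n : ℕ) :
    ∑ j ∈ Finset.range (n + 1),
      (-1 : ℤ) ^ (n - j) * (n + j).choose (n - j) * catalan (n + j) = 1 := by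
  have hrefl := Finset.sum_range_reflect
    (fun j => (-1 : ℤ) ^ (n - j) * (n + j).choose (n - j) * catalan (n + j)) (n + 1)
  rw [← hrefl]
  have hstep : ∑ i ∈ Finset.range (n + 1),
      (-1 : ℤ) ^ (n - (n + 1 - 1 - i)) * ((n + (n + 1 - 1 - i)).choose (n - (n + 1 - 1 - i)) : ℤ)
        * catalan (n + (n + 1 - 1 - i))
      = ∑ i ∈ Finset.range (n + 1),
      (-1 : ℤ) ^ i * (((2 * n - i).choose i) : ℤ) * catalan (2 * n - i) := by
    refine Finset.sum_congr rfl fun i hi => ?_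
    have hi' : i ≤ n := by simpa [Nat.lt_succ_iff] using Finset.mem_range.1 hi
    have e1 : n - (n + 1 - 1 - i) = i := by omega
    have e2 : n + (n + 1 - 1 - i) = 2 * n - i := by omega
    rw [e1, e2]
  rw [hstep]
  have hext : ∑ i ∈ Finset.range (2 * n + 2),
      (-1 : ℤ) ^ i * (((2 * n - i).choose i) : ℤ) * catalan (2 * n - i)
      = ∑ i ∈ Finset.range (n + 1),
      (-1 : ℤ) ^ i * (((2 * n - i).choose i) : ℤ) * catalan (2 * n - i) := by
    refine (Finset.sum_subset (Finset.range_subset_range.2 (by omega)) fun i _ hni => ?_).symm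
    have hi : n + 1 ≤ i := by
      by_contra hcon
      exact hni (Finset.mem_range.2 (by omega))
    rw [Nat.choose_eq_zero_of_lt (by omega : 2 * n - i < i)]
    push_cast; ring
  rw [← hext, T_eq_one (2 * n)]
end
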